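/- arXiv:1910.13358 — 7 statements merged into one kernel-verified Lean document; each statement's English description precedes it below -/
import Mathlib

section
/- Let β > 0 and β* := max(β, 2β−2). If E‖X‖^{β*} < ∞, then ĥ_X is square-integrable (in particular integrable, so t̃_X is defined) and t̃_X is square-integrable: E[ĥ_X²] < ∞ and E[t̃_X²] < ∞. -/
/-
Write `s, t, u, v` for the four distances around the cycle `X₁X₂X₃X₄`, so that
`ĥ = s^β - t^β + u^β - v^β`. By the triangle inequality `|s - t|, |u - v| ≤ A := ‖X₁‖ + ‖X₃‖`
and `|s - v|, |t - u| ≤ B := ‖X₂‖ + ‖X₄‖`, and all four distances are at most `A + B`.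
Grouping `ĥ` in these two ways gives `ĥ² ≤ 4 min(L A, L B)²`, where `L r` bounds `|x^β - y^β|`
for `|x - y| ≤ r`: `r^β` if `β ≤ 1` (subadditivity of `x^β`), `β (A + B)^(β-1) r` if `β ≥ 1`
(convexity). For `β ≥ 1` write `min(A, B)² ≤ min(A, B)^γ max(A, B)^(2-γ)` with `γ = min(β, 2)`;
since `2β - γ = β*`, in both cases `ĥ² ≤ C (1 + A^β*) (1 + B^β*)`. The two factors are
independent and integrable, so `ĥ ∈ L²`, and conditional expectation preserves `L²`.
-/

open MeasureTheory ProbabilityTheory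

noncomputable section

/-- `ĥ_X := d(X₁,X₂)^β − d(X₂,X₃)^β + d(X₃,X₄)^β − d(X₄,X₁)^β`, built from four
(independent) copies `X 0, X 1, X 2, X 3` of a random variable. -/
def hHat (β : ℝ) {Ω 𝒳 : Type*} [MetricSpace 𝒳] (X : Fin 4 → Ω → 𝒳) (ω : Ω) : ℝ :=
  dist (X 0 ω) (X 1 ω) ^ β - dist (X 1 ω) (X 2 ω) ^ β
    + dist (X 2 ω) (X 3 ω) ^ β - dist (X 3 ω) (X 0 ω) ^ β

/-- `t̃_X := E(ĥ_X | X₁, X₂)`, the conditional expectation of `ĥ_X` given the σ-algebra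
generated by `(X₁, X₂)`. -/
def tTilde (β : ℝ) {Ω 𝒳 : Type*} [MetricSpace 𝒳] [MeasurableSpace 𝒳]
    {mΩ : MeasurableSpace Ω} (μ : Measure Ω) (X : Fin 4 → Ω → 𝒳) : Ω → ℝ :=
  μ[hHat β X | MeasurableSpace.comap (fun ω => (X 0 ω, X 1 ω)) inferInstance]

lemma abs_rpow_sub_rpow_le_rpow_abs_sub {x y p : ℝ} (hx : 0 ≤ x) (hy : 0 ≤ y) (hp₀ : 0 ≤ p)
    (hp₁ : p ≤ 1) : |x ^ p - y ^ p| ≤ |x - y| ^ p := by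
  wlog hyx : y ≤ x generalizing x y
  · rw [abs_sub_comm, abs_sub_comm x]
    exact this hy hx (le_of_not_ge hyx)
  have hsub : x ^ p ≤ y ^ p + (x - y) ^ p := by
    simpa using Real.rpow_add_le_add_rpow hy (sub_nonneg.2 hyx) hp₀ hp₁
  rw [abs_of_nonneg (sub_nonneg.2 (Real.rpow_le_rpow hy hyx hp₀)),
    abs_of_nonneg (sub_nonneg.2 hyx)]
  linarith

lemma rpow_sub_rpow_le_mul_rpow_mul_sub {x y p : ℝ} (hy : 0 ≤ y) (hyx : y ≤ x) (hp : 1 ≤ p) :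
    x ^ p - y ^ p ≤ p * x ^ (p - 1) * (x - y) := by
  rcases hyx.eq_or_lt with rfl | hlt
  · simp
  have hslope := (convexOn_rpow hp).slope_le_of_hasDerivAt hy (hy.trans hlt.le) hlt
    (Real.hasDerivAt_rpow_const (Or.inr hp))
  rwa [slope_def_field, div_le_iff₀ (sub_pos.2 hlt)] at hslope

lemma abs_rpow_sub_rpow_le_mul_abs_sub {x y M p : ℝ} (hx : 0 ≤ x) (hy : 0 ≤ y) (hxM : x ≤ M)
    (hyM : y ≤ M) (hp : 1 ≤ p) : |x ^ p - y ^ p| ≤ p * M ^ (p - 1) * |x - y| := by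
  wlog hyx : y ≤ x generalizing x y
  · rw [abs_sub_comm, abs_sub_comm x]
    exact this hy hx hyM hxM (le_of_not_ge hyx)
  rw [abs_of_nonneg (sub_nonneg.2 (Real.rpow_le_rpow hy hyx (by linarith))),
    abs_of_nonneg (sub_nonneg.2 hyx)]
  calc x ^ p - y ^ p ≤ p * x ^ (p - 1) * (x - y) := rpow_sub_rpow_le_mul_rpow_mul_sub hy hyx hp
    _ ≤ p * M ^ (p - 1) * (x - y) := by gcongr

lemma rpow_le_one_add_rpow {x p q : ℝ} (hx : 0 ≤ x) (hp : 0 ≤ p) (hpq : p ≤ q) :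
    x ^ p ≤ 1 + x ^ q := by
  rcases le_total x 1 with h | h
  · linarith [Real.rpow_le_one hx h hp, Real.rpow_nonneg hx q]
  · linarith [Real.rpow_le_rpow_of_exponent_le h hpq]

lemma rpow_mul_rpow_le_one_add_mul_one_add {a b p q r : ℝ} (ha : 0 ≤ a) (hb : 0 ≤ b)
    (hp : 0 ≤ p) (hpr : p ≤ r) (hq : 0 ≤ q) (hqr : q ≤ r) :
    a ^ p * b ^ q ≤ (1 + a ^ r) * (1 + b ^ r) :=
  mul_le_mul (rpow_le_one_add_rpow ha hp hpr) (rpow_le_one_add_rpow hb hq hqr)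
    (Real.rpow_nonneg hb q) (by positivity)

lemma add_rpow_le_two_rpow_mul_add_rpow {x y p : ℝ} (hx : 0 ≤ x) (hy : 0 ≤ y) (hp : 0 ≤ p) :
    (x + y) ^ p ≤ 2 ^ p * (x ^ p + y ^ p) := by
  wlog hxy : x ≤ y generalizing x y
  · rw [add_comm x, add_comm (x ^ p)]
    exact this hy hx (le_of_not_ge hxy)
  calc (x + y) ^ p ≤ (2 * y) ^ p := Real.rpow_le_rpow (by positivity) (by linarith) hp
    _ = 2 ^ p * y ^ p := Real.mul_rpow zero_le_two hy
    _ ≤ 2 ^ p * (x ^ p + y ^ p) := by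
      gcongr
      linarith [Real.rpow_nonneg hx p]

lemma sq_sub_add_sub_le {a b c d L L' : ℝ} (hab : |a - b| ≤ L) (hcd : |c - d| ≤ L)
    (had : |a - d| ≤ L') (hbc : |b - c| ≤ L') : (a - b + c - d) ^ 2 ≤ 4 * min L L' ^ 2 := by
  have hL : |a - b + c - d| ≤ 2 * L := by
    calc |a - b + c - d| = |(a - b) + (c - d)| := by ring_nf
      _ ≤ |a - b| + |c - d| := abs_add_le _ _
      _ ≤ 2 * L := by linarith
  have hL' : |a - b + c - d| ≤ 2 * L' := by
    calc |a - b + c - d| = |(a - d) - (b - c)| := by ring_nf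
      _ ≤ |a - d| + |b - c| := abs_sub _ _
      _ ≤ 2 * L' := by linarith
  have hmin : |a - b + c - d| ≤ 2 * min L L' :=
    (le_min hL hL').trans_eq (mul_min_of_nonneg L L' zero_le_two).symm
  calc (a - b + c - d) ^ 2 = |a - b + c - d| ^ 2 := (sq_abs _).symm
    _ ≤ (2 * min L L') ^ 2 := pow_le_pow_left₀ (abs_nonneg _) hmin 2
    _ = 4 * min L L' ^ 2 := by ring

lemma two_mul_sub_min_two_eq_max (β : ℝ) : 2 * β - min β 2 = max β (2 * β - 2) := by
  rcases le_total β 2 with h | h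
  · rw [min_eq_left h, max_eq_left (by linarith)]; ring
  · rw [min_eq_right h, max_eq_right (by linarith)]

lemma add_rpow_mul_min_sq_le {A B β : ℝ} (hA : 0 ≤ A) (hB : 0 ≤ B) (hβ : 1 ≤ β) :
    (A + B) ^ (2 * β - 2) * min A B ^ 2 ≤
      2 ^ (2 * β - 2) * ((1 + A ^ max β (2 * β - 2)) * (1 + B ^ max β (2 * β - 2))) := by
  wlog hAB : A ≤ B generalizing A B
  · rw [add_comm A, min_comm, mul_comm (1 + A ^ _)]
    exact this hB hA (le_of_not_ge hAB)
  set γ := min β 2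
  have hγ₁ : 1 ≤ γ := le_min hβ one_le_two
  have hγ₂ : γ ≤ 2 := min_le_right _ _
  have hγβ : γ ≤ β := min_le_left _ _
  have hp : max β (2 * β - 2) = (2 * β - 2) + (2 - γ) := by
    rw [← two_mul_sub_min_two_eq_max]; ring
  have hA2 : A ^ (2 : ℝ) = A ^ (2 - γ) * A ^ γ := by
    rw [← Real.rpow_add' hA (by norm_num)]; ring_nf
  calc (A + B) ^ (2 * β - 2) * min A B ^ 2
      ≤ (2 * B) ^ (2 * β - 2) * (B ^ (2 - γ) * A ^ γ) := by
        rw [min_eq_left hAB, ← Real.rpow_two, hA2]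
        gcongr <;> linarith
    _ = 2 ^ (2 * β - 2) * (A ^ γ * B ^ max β (2 * β - 2)) := by
        rw [Real.mul_rpow zero_le_two hB, hp, Real.rpow_add' hB (by linarith)]; ring
    _ ≤ 2 ^ (2 * β - 2) * ((1 + A ^ max β (2 * β - 2)) * (1 + B ^ max β (2 * β - 2))) := by
        refine mul_le_mul_of_nonneg_left ?_ (by positivity)
        exact rpow_mul_rpow_le_one_add_mul_one_add hA hB (by linarith)
          (le_max_of_le_left hγβ) (by linarith) le_rfl

lemma sq_alternating_rpow_le_of_le_one {s t u v A B β r : ℝ} (hs : 0 ≤ s) (ht : 0 ≤ t)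
    (hu : 0 ≤ u) (hv : 0 ≤ v) (hβ₀ : 0 ≤ β) (hβ₁ : β ≤ 1) (hβr : β ≤ r)
    (hst : |s - t| ≤ A) (huv : |u - v| ≤ A) (hsv : |s - v| ≤ B) (htu : |t - u| ≤ B) :
    (s ^ β - t ^ β + u ^ β - v ^ β) ^ 2 ≤ 4 * ((1 + A ^ r) * (1 + B ^ r)) := by
  have hA : 0 ≤ A := (abs_nonneg _).trans hst
  have hB : 0 ≤ B := (abs_nonneg _).trans hsv
  have hpow {x y C : ℝ} (hx : 0 ≤ x) (hy : 0 ≤ y) (h : |x - y| ≤ C) : |x ^ β - y ^ β| ≤ C ^ β :=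
    (abs_rpow_sub_rpow_le_rpow_abs_sub hx hy hβ₀ hβ₁).trans
      (Real.rpow_le_rpow (abs_nonneg _) h hβ₀)
  calc (s ^ β - t ^ β + u ^ β - v ^ β) ^ 2 ≤ 4 * min (A ^ β) (B ^ β) ^ 2 :=
        sq_sub_add_sub_le (hpow hs ht hst) (hpow hu hv huv) (hpow hs hv hsv) (hpow ht hu htu)
    _ ≤ 4 * (A ^ β * B ^ β) := by
        rw [sq]
        gcongr
        exacts [min_le_left _ _, min_le_right _ _]
    _ ≤ 4 * ((1 + A ^ r) * (1 + B ^ r)) := mul_le_mul_of_nonneg_left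
        (rpow_mul_rpow_le_one_add_mul_one_add hA hB hβ₀ hβr hβ₀ hβr) zero_le_four

lemma sq_alternating_rpow_le_of_one_le {s t u v A B β : ℝ} (hs : 0 ≤ s) (ht : 0 ≤ t)
    (hu : 0 ≤ u) (hv : 0 ≤ v) (hβ : 1 ≤ β)
    (hst : |s - t| ≤ A) (huv : |u - v| ≤ A) (hsv : |s - v| ≤ B) (htu : |t - u| ≤ B)
    (hsM : s ≤ A + B) (htM : t ≤ A + B) (huM : u ≤ A + B) (hvM : v ≤ A + B) :
    (s ^ β - t ^ β + u ^ β - v ^ β) ^ 2 ≤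
      4 * β ^ 2 * 2 ^ (2 * β - 2) *
        ((1 + A ^ max β (2 * β - 2)) * (1 + B ^ max β (2 * β - 2))) := by
  have hA : 0 ≤ A := (abs_nonneg _).trans hst
  have hB : 0 ≤ B := (abs_nonneg _).trans hsv
  set K := β * (A + B) ^ (β - 1)
  have hK : 0 ≤ K := by positivity
  have hpow {x y C : ℝ} (hx : 0 ≤ x) (hy : 0 ≤ y) (hxM : x ≤ A + B) (hyM : y ≤ A + B)
      (h : |x - y| ≤ C) : |x ^ β - y ^ β| ≤ K * C :=
    (abs_rpow_sub_rpow_le_mul_abs_sub hx hy hxM hyM hβ).trans (mul_le_mul_of_nonneg_left h hK)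
  have hK2 : K ^ 2 = β ^ 2 * (A + B) ^ (2 * β - 2) := by
    rw [mul_pow, ← Real.rpow_mul_natCast (by positivity)]
    ring_nf
  calc (s ^ β - t ^ β + u ^ β - v ^ β) ^ 2 ≤ 4 * min (K * A) (K * B) ^ 2 :=
        sq_sub_add_sub_le (hpow hs ht hsM htM hst) (hpow hu hv huM hvM huv)
          (hpow hs hv hsM hvM hsv) (hpow ht hu htM huM htu)
    _ = 4 * β ^ 2 * ((A + B) ^ (2 * β - 2) * min A B ^ 2) := by
        rw [← mul_min_of_nonneg _ _ hK, mul_pow, hK2]; ring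
    _ ≤ 4 * β ^ 2 * (2 ^ (2 * β - 2) *
          ((1 + A ^ max β (2 * β - 2)) * (1 + B ^ max β (2 * β - 2)))) :=
        mul_le_mul_of_nonneg_left (add_rpow_mul_min_sq_le hA hB hβ) (by positivity)
    _ = _ := by ring

lemma abs_dist_sub_dist_le_dist_add_dist {α : Type*} [PseudoMetricSpace α] (x y z o : α) :
    |dist x z - dist y z| ≤ dist x o + dist y o :=
  (abs_dist_sub_le x y z).trans (dist_triangle_right x y o)

lemma sq_alternating_dist_rpow_le {α : Type*} [PseudoMetricSpace α] (o x₀ x₁ x₂ x₃ : α)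
    {β : ℝ} (hβ : 0 ≤ β) :
    (dist x₀ x₁ ^ β - dist x₁ x₂ ^ β + dist x₂ x₃ ^ β - dist x₃ x₀ ^ β) ^ 2 ≤
      max 4 (4 * β ^ 2 * 2 ^ (2 * β - 2)) *
        ((1 + (dist x₀ o + dist x₂ o) ^ max β (2 * β - 2)) *
          (1 + (dist x₁ o + dist x₃ o) ^ max β (2 * β - 2))) := by
  have hst := abs_dist_sub_dist_le_dist_add_dist x₀ x₂ x₁ o
  have huv := abs_dist_sub_dist_le_dist_add_dist x₂ x₀ x₃ o
  have hsv := abs_dist_sub_dist_le_dist_add_dist x₁ x₃ x₀ o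
  have htu := abs_dist_sub_dist_le_dist_add_dist x₁ x₃ x₂ o
  rw [dist_comm x₂ x₁] at hst
  rw [dist_comm x₀ x₃, add_comm] at huv
  rw [dist_comm x₁ x₀] at hsv
  rw [dist_comm x₃ x₂] at htu
  have hP : 0 ≤ (1 + (dist x₀ o + dist x₂ o) ^ max β (2 * β - 2)) *
      (1 + (dist x₁ o + dist x₃ o) ^ max β (2 * β - 2)) := by positivity
  rcases le_total β 1 with hβ₁ | hβ₁
  · refine (sq_alternating_rpow_le_of_le_one dist_nonneg dist_nonneg dist_nonneg dist_nonneg hβ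
      hβ₁ (le_max_left β (2 * β - 2)) hst huv hsv htu).trans ?_
    exact mul_le_mul_of_nonneg_right (le_max_left _ _) hP
  · have h₀ : 0 ≤ dist x₀ o := dist_nonneg
    have h₁ : 0 ≤ dist x₁ o := dist_nonneg
    have h₂ : 0 ≤ dist x₂ o := dist_nonneg
    have h₃ : 0 ≤ dist x₃ o := dist_nonneg
    refine (sq_alternating_rpow_le_of_one_le dist_nonneg dist_nonneg dist_nonneg dist_nonneg hβ₁
      hst huv hsv htu ?_ ?_ ?_ ?_).trans (mul_le_mul_of_nonneg_right (le_max_right _ _) hP)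
    · linarith [dist_triangle_right x₀ x₁ o]
    · linarith [dist_triangle_right x₁ x₂ o]
    · linarith [dist_triangle_right x₂ x₃ o]
    · linarith [dist_triangle_right x₃ x₀ o]

lemma integrable_rpow_add {Ω : Type*} [MeasurableSpace Ω] {μ : Measure Ω} {f g : Ω → ℝ}
    {p : ℝ} (hp : 0 ≤ p) (hf₀ : ∀ ω, 0 ≤ f ω) (hg₀ : ∀ ω, 0 ≤ g ω)
    (hfm : Measurable f) (hgm : Measurable g)
    (hf : Integrable (fun ω => f ω ^ p) μ) (hg : Integrable (fun ω => g ω ^ p) μ) :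
    Integrable (fun ω => (f ω + g ω) ^ p) μ := by
  refine ((hf.add hg).const_mul (2 ^ p)).mono' (by fun_prop) (ae_of_all _ fun ω => ?_)
  rw [Real.norm_of_nonneg (by have := hf₀ ω; have := hg₀ ω; positivity)]
  exact add_rpow_le_two_rpow_mul_add_rpow (hf₀ ω) (hg₀ ω) hp

lemma measurable_hHat {Ω : Type*} [MeasurableSpace Ω] {𝒳 : Type*} [MetricSpace 𝒳]
    [SecondCountableTopology 𝒳] [MeasurableSpace 𝒳] [BorelSpace 𝒳] {β : ℝ}
    {Xs : Fin 4 → Ω → 𝒳} (hXsm : ∀ i, Measurable (Xs i)) : Measurable (hHat β Xs) := by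
  unfold hHat
  fun_prop

lemma integrable_sq_hHat {Ω : Type*} [MeasurableSpace Ω] {μ : Measure Ω} [IsFiniteMeasure μ]
    {𝒳 : Type*} [MetricSpace 𝒳] [SecondCountableTopology 𝒳] [MeasurableSpace 𝒳] [BorelSpace 𝒳]
    (o : 𝒳) {β : ℝ} (hβ : 0 ≤ β) {Xs : Fin 4 → Ω → 𝒳} (hXsm : ∀ i, Measurable (Xs i))
    (hindep : iIndepFun Xs μ)
    (hmom : ∀ i, Integrable (fun ω => dist (Xs i ω) o ^ max β (2 * β - 2)) μ) :
    Integrable (fun ω => hHat β Xs ω ^ 2) μ := by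
  set p := max β (2 * β - 2)
  have hp : 0 ≤ p := hβ.trans (le_max_left _ _)
  set φ : 𝒳 × 𝒳 → ℝ := fun x => 1 + (dist x.1 o + dist x.2 o) ^ p
  have hφ : Measurable φ := by fun_prop
  have hφ_int (i j : Fin 4) : Integrable (fun ω => φ (Xs i ω, Xs j ω)) μ :=
    (integrable_const 1).add (integrable_rpow_add hp (fun _ => dist_nonneg)
      (fun _ => dist_nonneg) (by fun_prop) (by fun_prop) (hmom i) (hmom j))
  have hindep' : IndepFun (fun ω => φ (Xs 0 ω, Xs 2 ω)) (fun ω => φ (Xs 1 ω, Xs 3 ω)) μ :=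
    (hindep.indepFun_prodMk_prodMk hXsm 0 2 1 3 (by decide) (by decide) (by decide)
      (by decide)).comp hφ hφ
  refine ((hindep'.integrable_mul (hφ_int 0 2) (hφ_int 1 3)).const_mul
    (max 4 (4 * β ^ 2 * 2 ^ (2 * β - 2)))).mono'
    ((measurable_hHat hXsm).pow_const 2).aestronglyMeasurable (ae_of_all _ fun ω => ?_)
  rw [Real.norm_of_nonneg (sq_nonneg _)]
  exact sq_alternating_dist_rpow_le o _ _ _ _ hβ

theorem stmt3_general {Ω : Type*} [MeasurableSpace Ω] (μ : Measure Ω) [IsProbabilityMeasure μ]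
    {𝒳 : Type*} [MetricSpace 𝒳] [TopologicalSpace.SeparableSpace 𝒳]
    [MeasurableSpace 𝒳] [BorelSpace 𝒳] (o : 𝒳)
    (β : ℝ) (hβ : 0 < β)
    (X : Ω → 𝒳) (Xs : Fin 4 → Ω → 𝒳)
    (hXsm : ∀ i, Measurable (Xs i))
    (hindep : iIndepFun Xs μ)
    (hid : ∀ i, IdentDistrib (Xs i) X μ μ)
    (hmom : Integrable (fun ω => dist (X ω) o ^ max β (2 * β - 2)) μ) :
    Integrable (fun ω => hHat β Xs ω ^ 2) μ ∧ Integrable (hHat β Xs) μ ∧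
      Integrable (fun ω => tTilde β μ Xs ω ^ 2) μ := by
  have : SecondCountableTopology 𝒳 := UniformSpace.secondCountable_of_separable 𝒳
  have hmom_i (i : Fin 4) : Integrable (fun ω => dist (Xs i ω) o ^ max β (2 * β - 2)) μ :=
    ((hid i).comp (u := fun x => dist x o ^ max β (2 * β - 2)) (by fun_prop)).integrable_iff.2
      hmom
  have hsq : Integrable (fun ω => hHat β Xs ω ^ 2) μ :=
    integrable_sq_hHat o hβ.le hXsm hindep hmom_i
  have hL2 : MemLp (hHat β Xs) 2 μ :=
    (memLp_two_iff_integrable_sq (measurable_hHat hXsm).aestronglyMeasurable).2 hsq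
  have hL2_cond : MemLp (tTilde β μ Xs) 2 μ := hL2.condExp one_le_two
  exact ⟨hsq, hL2.integrable one_le_two, (memLp_two_iff_integrable_sq hL2_cond.1).1 hL2_cond⟩

/-- Let `β > 0` and `β* := max(β, 2β−2)`. If `E‖X‖^{β*} < ∞`, then
`ĥ_X` is square-integrable (in particular integrable, so `t̃_X` is defined) and `t̃_X`
is square-integrable: `E[ĥ_X²] < ∞` and `E[t̃_X²] < ∞`. -/
theorem stmt3 {Ω : Type*} [MeasurableSpace Ω] (μ : Measure Ω) [IsProbabilityMeasure μ]
    {𝒳 : Type*} [MetricSpace 𝒳] [TopologicalSpace.SeparableSpace 𝒳]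
    [MeasurableSpace 𝒳] [BorelSpace 𝒳] (o : 𝒳)
    (β : ℝ) (hβ : 0 < β)
    (X : Ω → 𝒳) (Xs : Fin 4 → Ω → 𝒳)
    (hXm : Measurable X) (hXsm : ∀ i, Measurable (Xs i))
    (hindep : iIndepFun Xs μ)
    (hid : ∀ i, IdentDistrib (Xs i) X μ μ)
    (hmom : Integrable (fun ω => dist (X ω) o ^ max β (2 * β - 2)) μ) :
    Integrable (fun ω => hHat β Xs ω ^ 2) μ ∧ Integrable (hHat β Xs) μ ∧
      Integrable (fun ω => tTilde β μ Xs ω ^ 2) μ :=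
  stmt3_general μ o β hβ X Xs hXsm hindep hid hmom
end
end

section
/- Let H₁ and H₂ be separable real Hilbert spaces, and let (X,Y) be a pair of random variables in H₁×H₂ with E‖X‖² < ∞ and E‖Y‖² < ∞, so that the Bochner expectations EX ∈ H₁ and EY ∈ H₂ exist. Then the following are equivalent: (i) E[⟨X₁−EX, X₂−EX⟩·⟨Y₁−EY, Y₂−EY⟩] = 0, i.e. the distance covariance DC₂(X,Y) with β = 2 vanishes; (ii) Cov(⟨X,x⟩, ⟨Y,y⟩) = 0 for every x ∈ H₁ and y ∈ H₂. -/
open MeasureTheory ProbabilityTheory UniformSpace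
open scoped RealInnerProductSpace TensorProduct

/-!
With `U = X - EX` and `V = Y - EY`, let `T = E[U ⊗ V]` in the Hilbert tensor product `H₁ ⊗̂ H₂`,
realised as the completion of the algebraic tensor product. Since
`⟪u ⊗ v, u' ⊗ v'⟫ = ⟪u, u'⟫ ⟪v, v'⟫`, independence of the two copies turns the left-hand side
of (i) into `⟪T, T⟫ = ‖T‖²`, while `Cov(⟪X, x⟫, ⟪Y, y⟫) = ⟪T, x ⊗ y⟫`. Pure tensors span a dense
subspace, so `T = 0` exactly when all these covariances vanish.
-/

section CenteredTensor

variable {E F : Type*} [NormedAddCommGroup E] [InnerProductSpace ℝ E]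
  [NormedAddCommGroup F] [InnerProductSpace ℝ F]

noncomputable def centeredTmul (m : E) (n : F) (z : E × F) : Completion (E ⊗[ℝ] F) :=
  ((z.1 - m) ⊗ₜ[ℝ] (z.2 - n) : E ⊗[ℝ] F)

lemma inner_centeredTmul_coe_tmul (m : E) (n : F) (z : E × F) (x : E) (y : F) :
    ⟪centeredTmul m n z, ((x ⊗ₜ[ℝ] y : E ⊗[ℝ] F) : Completion (E ⊗[ℝ] F))⟫
      = ⟪z.1 - m, x⟫ * ⟪z.2 - n, y⟫ := by
  rw [centeredTmul, Completion.inner_coe, TensorProduct.inner_tmul]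

lemma inner_centeredTmul (m : E) (n : F) (z z' : E × F) :
    ⟪centeredTmul m n z, centeredTmul m n z'⟫ = ⟪z.1 - m, z'.1 - m⟫ * ⟪z.2 - n, z'.2 - n⟫ :=
  inner_centeredTmul_coe_tmul m n z _ _

lemma norm_centeredTmul (m : E) (n : F) (z : E × F) :
    ‖centeredTmul m n z‖ = ‖z.1 - m‖ * ‖z.2 - n‖ := by
  rw [centeredTmul, Completion.norm_coe, TensorProduct.norm_tmul]

lemma continuous_centeredTmul (m : E) (n : F) : Continuous (centeredTmul m n) :=
  (Completion.continuous_coe _).comp <| (TensorProduct.mkL ℝ E F).continuous₂.comp <|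
    (continuous_fst.sub continuous_const).prodMk (continuous_snd.sub continuous_const)

lemma UniformSpace.Completion.eq_zero_of_forall_inner_coe_tmul_eq_zero
    {T : Completion (E ⊗[ℝ] F)}
    (h : ∀ x y, ⟪T, ((x ⊗ₜ[ℝ] y : E ⊗[ℝ] F) : Completion (E ⊗[ℝ] F))⟫ = 0) : T = 0 := by
  have hT : ∀ v : Completion (E ⊗[ℝ] F), ⟪T, v⟫ = 0 := by
    intro v
    induction v using Completion.induction_on with
    | hp => exact isClosed_eq (continuous_const.inner continuous_id) continuous_const
    | ih a =>
      induction a using TensorProduct.induction_on with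
      | zero => rw [Completion.coe_zero, inner_zero_right]
      | tmul x y => exact h x y
      | add a b ha hb => rw [Completion.coe_add, inner_add_right, ha, hb, add_zero]
  exact inner_self_eq_zero.1 (hT T)

lemma integrable_centeredTmul {Ω : Type*} [MeasurableSpace Ω] {μ : Measure Ω} [IsFiniteMeasure μ]
    {Z : Ω → E × F} (hX : MemLp (fun ω ↦ (Z ω).1) 2 μ) (hY : MemLp (fun ω ↦ (Z ω).2) 2 μ)
    (m : E) (n : F) :
    Integrable (fun ω ↦ centeredTmul m n (Z ω)) μ := by
  have hprod := (hX.sub (memLp_const m)).norm.integrable_mul (hY.sub (memLp_const n)).norm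
  refine hprod.congr' ((continuous_centeredTmul m n).comp_aestronglyMeasurable
    (hX.1.prodMk hY.1)) (ae_of_all _ fun ω ↦ ?_)
  simp [norm_centeredTmul]

end CenteredTensor

section Moments

variable {Ω E F : Type*} [MeasurableSpace Ω] {μ : Measure Ω}
  [NormedAddCommGroup E] [InnerProductSpace ℝ E] [CompleteSpace E]
  [NormedAddCommGroup F] [InnerProductSpace ℝ F] [CompleteSpace F]

lemma integral_inner_const {W : Ω → E} (hW : Integrable W μ) (w : E) :
    ∫ ω, ⟪W ω, w⟫ ∂μ = ⟪∫ ω, W ω ∂μ, w⟫ := by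
  simp_rw [real_inner_comm w]
  exact integral_inner hW w

lemma integral_inner_mul_inner_sub [IsProbabilityMeasure μ] {X : Ω → E} {Y : Ω → F}
    (hX : MemLp X 2 μ) (hY : MemLp Y 2 μ) (x : E) (y : F) :
    (∫ ω, ⟪X ω, x⟫ * ⟪Y ω, y⟫ ∂μ) - (∫ ω, ⟪X ω, x⟫ ∂μ) * (∫ ω, ⟪Y ω, y⟫ ∂μ)
      = ∫ ω, ⟪X ω - ∫ ω', X ω' ∂μ, x⟫ * ⟪Y ω - ∫ ω', Y ω' ∂μ, y⟫ ∂μ := by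
  have hXi := hX.integrable one_le_two
  have hYi := hY.integrable one_le_two
  have hcov := covariance_eq_sub (hX.inner_const x) (hY.inner_const y)
  rw [covariance, integral_inner_const hXi, integral_inner_const hYi] at hcov
  rw [integral_inner_const hXi, integral_inner_const hYi]
  simp only [← inner_sub_left] at hcov
  exact hcov.symm

end Moments

section Independence

variable {Ω α G : Type*} [MeasurableSpace Ω] {μ : Measure Ω} [MeasurableSpace α]
  [NormedAddCommGroup G] [InnerProductSpace ℝ G] [CompleteSpace G]

lemma ProbabilityTheory.IndepFun.integral_inner_comp_eq_norm_sq {Z Z₁ Z₂ : Ω → α}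
    (hindep : Z₁ ⟂ᵢ[μ] Z₂) (h₁ : IdentDistrib Z₁ Z μ μ) (h₂ : IdentDistrib Z₂ Z μ μ) {f : α → G}
    (hf : Integrable f (μ.map Z)) :
    ∫ ω, ⟪f (Z₁ ω), f (Z₂ ω)⟫ ∂μ = ‖∫ ω, f (Z ω) ∂μ‖ ^ 2 := by
  have hcopy : ∀ {Z' : Ω → α}, IdentDistrib Z' Z μ μ → ∫ ω, f (Z' ω) ∂μ = ∫ ω, f (Z ω) ∂μ := by
    intro Z' h
    rw [← integral_map h.aemeasurable_fst (h.map_eq ▸ hf.1), h.map_eq,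
      integral_map h.aemeasurable_snd hf.1]
  have hB := hindep.integral_bilin_comp_comp h₁.aemeasurable_fst h₂.aemeasurable_fst
    (h₁.map_eq ▸ hf) (h₂.map_eq ▸ hf) (innerSL ℝ)
  rw [hcopy h₁, hcopy h₂] at hB
  exact hB.trans (real_inner_self_eq_norm_sq _)

end Independence

theorem stmt12_general {Ω : Type*} [MeasurableSpace Ω] (μ : Measure Ω) [IsProbabilityMeasure μ]
    {H₁ H₂ : Type*}
    [NormedAddCommGroup H₁] [InnerProductSpace ℝ H₁] [CompleteSpace H₁]
    [SecondCountableTopology H₁] [MeasurableSpace H₁] [BorelSpace H₁]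
    [NormedAddCommGroup H₂] [InnerProductSpace ℝ H₂] [CompleteSpace H₂]
    [SecondCountableTopology H₂] [MeasurableSpace H₂] [BorelSpace H₂]
    (Z : Ω → H₁ × H₂) (Zs : Fin 2 → Ω → H₁ × H₂)
    (hindep : iIndepFun Zs μ)
    (hid : ∀ i, IdentDistrib (Zs i) Z μ μ)
    (hmomX : Integrable (fun ω => ‖(Z ω).1‖ ^ 2) μ)
    (hmomY : Integrable (fun ω => ‖(Z ω).2‖ ^ 2) μ) :
    (∫ ω, ⟪(Zs 0 ω).1 - ∫ ω', (Z ω').1 ∂μ, (Zs 1 ω).1 - ∫ ω', (Z ω').1 ∂μ⟫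
        * ⟪(Zs 0 ω).2 - ∫ ω', (Z ω').2 ∂μ, (Zs 1 ω).2 - ∫ ω', (Z ω').2 ∂μ⟫ ∂μ = 0)
      ↔ ∀ (x : H₁) (y : H₂),
          (∫ ω, ⟪(Z ω).1, x⟫ * ⟪(Z ω).2, y⟫ ∂μ)
            - (∫ ω, ⟪(Z ω).1, x⟫ ∂μ) * (∫ ω, ⟪(Z ω).2, y⟫ ∂μ) = 0 := by
  have hZ : AEMeasurable Z μ := (hid 0).aemeasurable_snd
  have hX : MemLp (fun ω ↦ (Z ω).1) 2 μ :=
    (memLp_two_iff_integrable_sq_norm hZ.fst.aestronglyMeasurable).2 hmomX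
  have hY : MemLp (fun ω ↦ (Z ω).2) 2 μ :=
    (memLp_two_iff_integrable_sq_norm hZ.snd.aestronglyMeasurable).2 hmomY
  set m := ∫ ω, (Z ω).1 ∂μ
  set n := ∫ ω, (Z ω).2 ∂μ
  set T := ∫ ω, centeredTmul m n (Z ω) ∂μ
  have hdcov : (∫ ω, ⟪(Zs 0 ω).1 - m, (Zs 1 ω).1 - m⟫ * ⟪(Zs 0 ω).2 - n, (Zs 1 ω).2 - n⟫ ∂μ)
      = ‖T‖ ^ 2 := by
    simp_rw [← inner_centeredTmul]
    refine (hindep.indepFun zero_ne_one).integral_inner_comp_eq_norm_sq (hid 0) (hid 1) ?_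
    exact (integrable_map_measure (continuous_centeredTmul m n).aestronglyMeasurable hZ).2
      (integrable_centeredTmul hX hY m n)
  have hcov : ∀ x y, (∫ ω, ⟪(Z ω).1, x⟫ * ⟪(Z ω).2, y⟫ ∂μ)
      - (∫ ω, ⟪(Z ω).1, x⟫ ∂μ) * (∫ ω, ⟪(Z ω).2, y⟫ ∂μ)
        = ⟪T, ((x ⊗ₜ[ℝ] y : H₁ ⊗[ℝ] H₂) : Completion (H₁ ⊗[ℝ] H₂))⟫ := by
    intro x y
    rw [integral_inner_mul_inner_sub hX hY,
      ← integral_inner_const (integrable_centeredTmul hX hY m n)]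
    simp only [inner_centeredTmul_coe_tmul, m, n]
  rw [hdcov, sq_eq_zero_iff, norm_eq_zero]
  simp_rw [hcov]
  exact ⟨fun hT x y ↦ by rw [hT, inner_zero_left],
    Completion.eq_zero_of_forall_inner_coe_tmul_eq_zero⟩

/-- Let `H₁`, `H₂` be separable real Hilbert spaces and `(X,Y)` a
pair of random variables in `H₁×H₂` with `E‖X‖² < ∞`, `E‖Y‖² < ∞` (so the Bochner
expectations `EX`, `EY` exist). Then the following are equivalent:
(i) `E[⟪X₁−EX, X₂−EX⟫·⟪Y₁−EY, Y₂−EY⟫] = 0`, i.e. `DC₂(X,Y) = 0`;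
(ii) `Cov(⟪X,x⟫, ⟪Y,y⟫) = 0` for every `x ∈ H₁`, `y ∈ H₂`. -/
theorem stmt12 {Ω : Type*} [MeasurableSpace Ω] (μ : Measure Ω) [IsProbabilityMeasure μ]
    {H₁ H₂ : Type*}
    [NormedAddCommGroup H₁] [InnerProductSpace ℝ H₁] [CompleteSpace H₁]
    [SecondCountableTopology H₁] [MeasurableSpace H₁] [BorelSpace H₁]
    [NormedAddCommGroup H₂] [InnerProductSpace ℝ H₂] [CompleteSpace H₂]
    [SecondCountableTopology H₂] [MeasurableSpace H₂] [BorelSpace H₂]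
    (Z : Ω → H₁ × H₂) (Zs : Fin 2 → Ω → H₁ × H₂)
    (hZm : Measurable Z) (hZsm : ∀ i, Measurable (Zs i))
    (hindep : iIndepFun Zs μ)
    (hid : ∀ i, IdentDistrib (Zs i) Z μ μ)
    (hmomX : Integrable (fun ω => ‖(Z ω).1‖ ^ 2) μ)
    (hmomY : Integrable (fun ω => ‖(Z ω).2‖ ^ 2) μ) :
    (∫ ω, ⟪(Zs 0 ω).1 - ∫ ω', (Z ω').1 ∂μ, (Zs 1 ω).1 - ∫ ω', (Z ω').1 ∂μ⟫
        * ⟪(Zs 0 ω).2 - ∫ ω', (Z ω').2 ∂μ, (Zs 1 ω).2 - ∫ ω', (Z ω').2 ∂μ⟫ ∂μ = 0)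
      ↔ ∀ (x : H₁) (y : H₂),
          (∫ ω, ⟪(Z ω).1, x⟫ * ⟪(Z ω).2, y⟫ ∂μ)
            - (∫ ω, ⟪(Z ω).1, x⟫ ∂μ) * (∫ ω, ⟪(Z ω).2, y⟫ ∂μ) = 0 :=
  stmt12_general μ Z Zs hindep hid hmomX hmomY
end

section
/- Let β > 0. Suppose that X and Y are non-degenerate (neither is almost surely equal to a single point), and that at least one of E‖X‖^β, E‖Y‖^β, E[‖X‖^β·‖Y‖^β] is infinite. Then E[d(X₁,X₂)^β d(Y₁,Y₃)^β] = ∞ and also E[d(X₁,X₂)^β d(Y₁,Y₂)^β] + E[d(X₁,X₂)^β]·E[d(Y₁,Y₂)^β] = ∞ (where expectations of nonnegative variables are taken in [0,∞], with the convention 0·∞ = 0 in the product); in other words, the defining expression E[d(X₁,X₂)^β d(Y₁,Y₂)^β] + E[d(X₁,X₂)^β]·E[d(Y₁,Y₂)^β] − 2·E[d(X₁,X₂)^β d(Y₁,Y₃)^β] is of the meaningless form ∞ − ∞. -/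
open MeasureTheory ProbabilityTheory
open scoped ENNReal

noncomputable section

/-!
Write `φ x = E d(x, X)^β` and `ψ y = E d(y, Y)^β`. Non-degeneracy puts two points of the support
of `X` at positive distance, so `φ` is bounded below by a positive constant, and the triangle
inequality through the points of a ball of positive mass gives `‖x‖^β ≲ φ x + 1`, hence
`‖x‖^β ≲ φ x`. Thus each of the three moments is dominated by
`E[φ X · ψ Y] = E[d(X₁,X₂)^β d(Y₁,Y₃)^β]`. In the same way
`‖x‖^β ‖y‖^β ≲ E[(d(x,X)^β + 1)(d(y,Y)^β + 1)]`, so an infinite moment makes one of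
`E[d(X₁,X₂)^β d(Y₁,Y₂)^β]`, `E d(X₁,X₂)^β`, `E d(Y₁,Y₂)^β` infinite, while the last two are
positive.
-/

theorem Real.add_rpow_le_two_rpow_mul {u v β : ℝ} (hu : 0 ≤ u) (hv : 0 ≤ v) (hβ : 0 ≤ β) :
    (u + v) ^ β ≤ 2 ^ β * (u ^ β + v ^ β) := by
  have hmax : (u + v) ^ β ≤ (2 * max u v) ^ β :=
    Real.rpow_le_rpow (by positivity) (by linarith [le_max_left u v, le_max_right u v]) hβ
  rw [Real.mul_rpow zero_le_two (le_max_of_le_left hu)] at hmax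
  refine hmax.trans (mul_le_mul_of_nonneg_left ?_ (by positivity))
  rcases max_choice u v with h | h <;> rw [h]
  · exact le_add_of_nonneg_right (by positivity)
  · exact le_add_of_nonneg_left (by positivity)

theorem ENNReal.add_le_add_one_mul_add_one (a b : ℝ≥0∞) : a + b ≤ (a + 1) * (b + 1) :=
  calc a + b ≤ a * b + (a + b) + 1 := le_add_self.trans le_self_add
    _ = (a + 1) * (b + 1) := by ring

theorem ofReal_rpow_dist_le_of_dist_le {E : Type*} [PseudoMetricSpace E] {β r : ℝ}
    (hβ : 0 ≤ β) {o z : E} (hz : dist z o ≤ r) (x : E) :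
    ENNReal.ofReal (dist x o ^ β)
      ≤ ENNReal.ofReal (2 ^ β) * (ENNReal.ofReal (r ^ β) + 1)
        * (ENNReal.ofReal (dist x z ^ β) + 1) := by
  have hr : 0 ≤ r := dist_nonneg.trans hz
  have htri : dist x o ^ β ≤ 2 ^ β * (dist x z ^ β + r ^ β) :=
    (Real.rpow_le_rpow dist_nonneg ((dist_triangle x z o).trans (by linarith)) hβ).trans
      (Real.add_rpow_le_two_rpow_mul dist_nonneg hr hβ)
  calc ENNReal.ofReal (dist x o ^ β)
      ≤ ENNReal.ofReal (2 ^ β) * (ENNReal.ofReal (dist x z ^ β) + ENNReal.ofReal (r ^ β)) := by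
        rw [← ENNReal.ofReal_add (by positivity) (by positivity),
          ← ENNReal.ofReal_mul (by positivity)]
        exact ENNReal.ofReal_le_ofReal htri
    _ ≤ ENNReal.ofReal (2 ^ β) * ((ENNReal.ofReal (r ^ β) + 1)
        * (ENNReal.ofReal (dist x z ^ β) + 1)) := by
        rw [add_comm]
        gcongr
        exact ENNReal.add_le_add_one_mul_add_one _ _
    _ = _ := (mul_assoc _ _ _).symm

section Integrals

variable {Ω : Type*} [MeasurableSpace Ω] {μ : Measure Ω}

theorem mul_measure_le_lintegral_of_forall_le {S : Set Ω} (hS : MeasurableSet S) {c : ℝ≥0∞}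
    {f : Ω → ℝ≥0∞} (h : ∀ ω ∈ S, c ≤ f ω) : c * μ S ≤ ∫⁻ ω, f ω ∂μ := by
  rw [← lintegral_indicator_const hS]
  exact lintegral_mono (Set.indicator_le h)

theorem lintegral_ne_zero_of_forall_le [NeZero μ] {f : Ω → ℝ≥0∞} {c : ℝ≥0∞} (hc : c ≠ 0)
    (h : ∀ ω, c ≤ f ω) : ∫⁻ ω, f ω ∂μ ≠ 0 :=
  ne_bot_of_le_ne_bot (mul_ne_zero hc (NeZero.ne (μ Set.univ)))
    (mul_measure_le_lintegral_of_forall_le MeasurableSet.univ fun ω _ => h ω)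

theorem lintegral_eq_top_of_mul_le_mul {f g : Ω → ℝ≥0∞} {c C : ℝ≥0∞} (hc : c ≠ 0) (hC : C ≠ ∞)
    (h : ∀ ω, c * f ω ≤ C * g ω) (hf : ∫⁻ ω, f ω ∂μ = ∞) : ∫⁻ ω, g ω ∂μ = ∞ := by
  have hle : c * ∫⁻ ω, f ω ∂μ ≤ C * ∫⁻ ω, g ω ∂μ :=
    (lintegral_const_mul_le c f).trans
      ((lintegral_mono h).trans_eq (lintegral_const_mul' C g hC))
  rw [hf, ENNReal.mul_top hc, top_le_iff] at hle
  exact (ENNReal.mul_eq_top.1 hle).elim (fun h => h.2) fun h => absurd h.1 hC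

theorem exists_mul_le_mul_lintegral_of_iUnion_eq_univ [NeZero μ] {ι : Type*} {S : ℕ → Set Ω}
    (hS : ∀ n, MeasurableSet (S n)) (hcover : ⋃ n, S n = Set.univ) {f : ι → ℝ≥0∞}
    {g : ι → Ω → ℝ≥0∞} (h : ∀ n, ∃ C ≠ ∞, ∀ i, ∀ ω ∈ S n, f i ≤ C * g i ω) :
    ∃ c ≠ 0, ∃ C ≠ ∞, ∀ i, c * f i ≤ C * ∫⁻ ω, g i ω ∂μ := by
  obtain ⟨n, hn⟩ := exists_pos_measure_of_cover hcover (NeZero.ne μ)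
  obtain ⟨C, hC, hfg⟩ := h n
  refine ⟨μ (S n), hn.ne', C, hC, fun i => ?_⟩
  rw [mul_comm, ← lintegral_const_mul' _ _ hC]
  exact mul_measure_le_lintegral_of_forall_le (hS n) (hfg i)

theorem lintegral_add_one_mul_add_one [IsProbabilityMeasure μ] {f g : Ω → ℝ≥0∞}
    (hf : AEMeasurable f μ) (hg : AEMeasurable g μ) :
    ∫⁻ ω, (f ω + 1) * (g ω + 1) ∂μ
      = ∫⁻ ω, f ω * g ω ∂μ + ∫⁻ ω, f ω ∂μ + ∫⁻ ω, g ω ∂μ + 1 := by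
  have hexpand : ∀ ω, (f ω + 1) * (g ω + 1) = f ω * g ω + f ω + g ω + 1 := fun ω => by ring
  simp_rw [hexpand]
  rw [lintegral_add_right _ measurable_const, lintegral_add_right' _ hg,
    lintegral_add_right' _ hf, lintegral_const, measure_univ, one_mul]

theorem ProbabilityTheory.IndepFun.lintegral_comp_eq_lintegral_lintegral [IsFiniteMeasure μ]
    {α γ : Type*} [MeasurableSpace α] [MeasurableSpace γ] {U U' : Ω → α} {V V' : Ω → γ}
    (hUV : IndepFun U V μ) (hU : IdentDistrib U U' μ μ) (hV : IdentDistrib V V' μ μ)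
    {f : α → γ → ℝ≥0∞} (hf : Measurable (Function.uncurry f)) :
    ∫⁻ ω, f (U ω) (V ω) ∂μ = ∫⁻ ω, ∫⁻ ω', f (U' ω) (V' ω') ∂μ ∂μ := by
  calc ∫⁻ ω, f (U ω) (V ω) ∂μ = ∫⁻ p, f p.1 p.2 ∂μ.map fun ω => (U ω, V ω) :=
        (lintegral_map' hf.aemeasurable (hU.aemeasurable_fst.prodMk hV.aemeasurable_fst)).symm
    _ = ∫⁻ u, ∫⁻ v, f u v ∂μ.map V' ∂μ.map U' := by
        rw [(indepFun_iff_map_prod_eq_prod_map_map hU.aemeasurable_fst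
          hV.aemeasurable_fst).1 hUV, hU.map_eq, hV.map_eq]
        exact lintegral_prod (Function.uncurry f) hf.aemeasurable
    _ = ∫⁻ ω, ∫⁻ ω', f (U' ω) (V' ω') ∂μ ∂μ := by
        refine (lintegral_map' (f := fun u => ∫⁻ v, f u v ∂μ.map V')
          hf.lintegral_prod_right'.aemeasurable hU.aemeasurable_snd).trans
          (lintegral_congr fun ω => ?_)
        exact lintegral_map' (hf.comp measurable_prodMk_left).aemeasurable hV.aemeasurable_snd

end Integrals

section MeanRpowDist

variable {Ω : Type*} [MeasurableSpace Ω] {μ : Measure Ω}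
  {E : Type*} [PseudoMetricSpace E] [MeasurableSpace E] [OpensMeasurableSpace E]
  {W : Ω → E} {β : ℝ}

def meanRpowDist (μ : Measure Ω) (W : Ω → E) (β : ℝ) (x : E) : ℝ≥0∞ :=
  ∫⁻ ω, ENNReal.ofReal (dist x (W ω) ^ β) ∂μ

theorem exists_le_meanRpowDist [T1Space E] [SecondCountableTopology E] (hW : Measurable W)
    (hnd : ∀ x, ¬ ∀ᵐ ω ∂μ, W ω = x) (hβ : 0 ≤ β) :
    ∃ c ≠ 0, ∀ x, c ≤ meanRpowDist μ W β x := by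
  rcases isEmpty_or_nonempty E with hE | hE
  · exact ⟨1, one_ne_zero, fun x => hE.elim x⟩
  obtain ⟨a, b, hab, ha, hb⟩ :=
    exists_ne_forall_mem_nhds_pos_measure_preimage fun x => Filter.not_eventually.1 (hnd x)
  set r := dist a b / 4 with hr_def
  have hr : 0 < r := by
    have : 0 < dist a b := dist_nonneg.lt_of_ne fun h => hab (Metric.inseparable_iff.2 h.symm).eq
    positivity
  -- Every `x` is `2r`-far from `a` or from `b`, hence `r`-far from the `r`-ball around it.
  have hfar : ∀ s x, 2 * r ≤ dist x s →
      ENNReal.ofReal (r ^ β) * μ (W ⁻¹' Metric.ball s r) ≤ meanRpowDist μ W β x := by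
    intro s x hxs
    refine mul_measure_le_lintegral_of_forall_le (hW measurableSet_ball) fun ω hω => ?_
    have hω_s := Metric.mem_ball.1 hω
    have := dist_triangle x (W ω) s
    exact ENNReal.ofReal_le_ofReal (Real.rpow_le_rpow hr.le (by linarith) hβ)
  refine ⟨ENNReal.ofReal (r ^ β) * min (μ (W ⁻¹' Metric.ball a r)) (μ (W ⁻¹' Metric.ball b r)),
    mul_ne_zero (ENNReal.ofReal_pos.2 (Real.rpow_pos_of_pos hr β)).ne'
      (lt_min (ha _ (Metric.ball_mem_nhds a hr)) (hb _ (Metric.ball_mem_nhds b hr))).ne',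
    fun x => ?_⟩
  have := dist_triangle_left a b x
  by_cases hxa : 2 * r ≤ dist x a
  · exact (mul_le_mul_right (min_le_left _ _) _).trans (hfar a x hxa)
  · exact (mul_le_mul_right (min_le_right _ _) _).trans (hfar b x (by linarith))

theorem exists_mul_rpow_dist_le_mul_meanRpowDist_add_one [IsProbabilityMeasure μ]
    (hW : Measurable W) (hβ : 0 ≤ β) (o : E) :
    ∃ c ≠ 0, ∃ C ≠ ∞, ∀ x,
      c * ENNReal.ofReal (dist x o ^ β) ≤ C * (meanRpowDist μ W β x + 1) := by
  obtain ⟨c, hc, C, hC, hbound⟩ := exists_mul_le_mul_lintegral_of_iUnion_eq_univ (μ := μ)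
    (fun n => hW measurableSet_ball)
    (by rw [← Set.preimage_iUnion, Metric.iUnion_ball_nat o, Set.preimage_univ])
    (f := fun x => ENNReal.ofReal (dist x o ^ β))
    (g := fun x ω => ENNReal.ofReal (dist x (W ω) ^ β) + 1)
    fun n => ⟨_, by finiteness, fun x ω hω =>
      ofReal_rpow_dist_le_of_dist_le hβ (Metric.mem_ball.1 hω).le x⟩
  refine ⟨c, hc, C, hC, fun x => (hbound x).trans_eq ?_⟩
  rw [lintegral_add_right _ measurable_const, lintegral_const, measure_univ, one_mul]
  rfl

theorem exists_mul_rpow_dist_le_mul_meanRpowDist [IsProbabilityMeasure μ] [T1Space E]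
    [SecondCountableTopology E] (hW : Measurable W) (hnd : ∀ x, ¬ ∀ᵐ ω ∂μ, W ω = x)
    (hβ : 0 ≤ β) (o : E) :
    ∃ c ≠ 0, ∃ C ≠ ∞, ∀ x, c * ENNReal.ofReal (dist x o ^ β) ≤ C * meanRpowDist μ W β x := by
  obtain ⟨l, hl, hlow⟩ := exists_le_meanRpowDist hW hnd hβ
  obtain ⟨c, hc, C, hC, hup⟩ := exists_mul_rpow_dist_le_mul_meanRpowDist_add_one (μ := μ) hW hβ o
  -- `min l 1` is a finite lower bound, so it can absorb the `+ 1`.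
  set l' := min l 1
  have hl'_top : l' ≠ ∞ := ((min_le_right l 1).trans_lt ENNReal.one_lt_top).ne
  refine ⟨l' * c, mul_ne_zero (by simp [l', hl]) hc, C * (l' + 1), by finiteness, fun x => ?_⟩
  have hlx : l' ≤ meanRpowDist μ W β x := (min_le_left l 1).trans (hlow x)
  calc l' * c * ENNReal.ofReal (dist x o ^ β)
      ≤ l' * (C * (meanRpowDist μ W β x + 1)) := by
        rw [mul_assoc]; exact mul_le_mul_right (hup x) _
    _ = C * (l' * meanRpowDist μ W β x + l') := by ring
    _ ≤ C * (l' * meanRpowDist μ W β x + meanRpowDist μ W β x) := by gcongr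
    _ = C * (l' + 1) * meanRpowDist μ W β x := by ring

theorem exists_mul_rpow_dist_mul_le_mul_lintegral [NeZero μ] {F : Type*} [PseudoMetricSpace F]
    [MeasurableSpace F] [OpensMeasurableSpace F] {Z : Ω → E × F} (hZ : Measurable Z)
    (hβ : 0 ≤ β) (o : E) (o' : F) :
    ∃ c ≠ 0, ∃ C ≠ ∞, ∀ x y,
      c * (ENNReal.ofReal (dist x o ^ β) * ENNReal.ofReal (dist y o' ^ β))
        ≤ C * ∫⁻ ω, (ENNReal.ofReal (dist x (Z ω).1 ^ β) + 1)
            * (ENNReal.ofReal (dist y (Z ω).2 ^ β) + 1) ∂μ := by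
  obtain ⟨c, hc, C, hC, hbound⟩ := exists_mul_le_mul_lintegral_of_iUnion_eq_univ (μ := μ)
    (S := fun n : ℕ => Z ⁻¹' (Metric.ball o n ×ˢ Metric.ball o' n))
    (fun n => hZ (measurableSet_ball.prod measurableSet_ball))
    (by simp_rw [ball_prod_same, ← Set.preimage_iUnion, Metric.iUnion_ball_nat,
      Set.preimage_univ])
    (f := fun p : E × F => ENNReal.ofReal (dist p.1 o ^ β) * ENNReal.ofReal (dist p.2 o' ^ β))
    (g := fun p ω => (ENNReal.ofReal (dist p.1 (Z ω).1 ^ β) + 1)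
      * (ENNReal.ofReal (dist p.2 (Z ω).2 ^ β) + 1))
    fun n => ⟨_, by finiteness, fun p ω hω => (mul_le_mul'
      (ofReal_rpow_dist_le_of_dist_le hβ (Metric.mem_ball.1 hω.1).le p.1)
      (ofReal_rpow_dist_le_of_dist_le hβ (Metric.mem_ball.1 hω.2).le p.2)).trans_eq
      (mul_mul_mul_comm _ _ _ _)⟩
  exact ⟨c, hc, C, hC, fun x y => hbound (x, y)⟩

end MeanRpowDist

section DistanceCovariance

variable {Ω : Type*} [MeasurableSpace Ω] {μ : Measure Ω} [IsProbabilityMeasure μ]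
  {E F : Type*}
  [MetricSpace E] [MeasurableSpace E] [OpensMeasurableSpace E] [SecondCountableTopology E]
  [MetricSpace F] [MeasurableSpace F] [OpensMeasurableSpace F] [SecondCountableTopology F]
  {Z : Ω → E × F} {β : ℝ}

def HasInfiniteRpowMoment (μ : Measure Ω) (Z : Ω → E × F) (o : E) (o' : F) (β : ℝ) : Prop :=
  (∫⁻ ω, ENNReal.ofReal (dist (Z ω).1 o ^ β) ∂μ = ∞) ∨
    (∫⁻ ω, ENNReal.ofReal (dist (Z ω).2 o' ^ β) ∂μ = ∞) ∨
    (∫⁻ ω, ENNReal.ofReal (dist (Z ω).1 o ^ β * dist (Z ω).2 o' ^ β) ∂μ = ∞)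

theorem lintegral_rpow_dist_mul_rpow_dist_eq {U V W : Ω → E × F}
    (hU_VW : IndepFun U (fun ω => (V ω, W ω)) μ) (hVW : IndepFun V W μ)
    (hU : IdentDistrib U Z μ μ) (hV : IdentDistrib V Z μ μ) (hW : IdentDistrib W Z μ μ) :
    ∫⁻ ω, ENNReal.ofReal (dist (U ω).1 (V ω).1 ^ β * dist (U ω).2 (W ω).2 ^ β) ∂μ
      = ∫⁻ ω, meanRpowDist μ (fun ω => (Z ω).1) β (Z ω).1
          * meanRpowDist μ (fun ω => (Z ω).2) β (Z ω).2 ∂μ := by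
  have hVm := hV.aemeasurable_fst
  have hWm := hW.aemeasurable_fst
  rw [hU_VW.lintegral_comp_eq_lintegral_lintegral hU (IdentDistrib.refl (hVm.prodMk hWm))
    (f := fun u vw => ENNReal.ofReal (dist u.1 vw.1.1 ^ β * dist u.2 vw.2.2 ^ β)) (by fun_prop)]
  refine lintegral_congr fun ω => ?_
  simp_rw [ENNReal.ofReal_mul (Real.rpow_nonneg dist_nonneg _)]
  refine (lintegral_mul_eq_lintegral_mul_lintegral_of_indepFun' (by fun_prop) (by fun_prop)
    (hVW.comp (φ := fun v => ENNReal.ofReal (dist (Z ω).1 v.1 ^ β))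
      (ψ := fun w => ENNReal.ofReal (dist (Z ω).2 w.2 ^ β)) (by fun_prop) (by fun_prop))).trans ?_
  congr 1
  · exact (hV.comp (u := fun v => ENNReal.ofReal (dist (Z ω).1 v.1 ^ β)) (by fun_prop)).lintegral_eq
  · exact (hW.comp (u := fun w => ENNReal.ofReal (dist (Z ω).2 w.2 ^ β)) (by fun_prop)).lintegral_eq

theorem lintegral_meanRpowDist_mul_meanRpowDist_eq_top (hZ : Measurable Z)
    (hXnd : ∀ x, ¬ ∀ᵐ ω ∂μ, (Z ω).1 = x) (hYnd : ∀ y, ¬ ∀ᵐ ω ∂μ, (Z ω).2 = y) (hβ : 0 ≤ β)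
    {o : E} {o' : F} (hmom : HasInfiniteRpowMoment μ Z o o' β) :
    ∫⁻ ω, meanRpowDist μ (fun ω => (Z ω).1) β (Z ω).1
      * meanRpowDist μ (fun ω => (Z ω).2) β (Z ω).2 ∂μ = ∞ := by
  obtain ⟨cX, hcX, CX, hCX, hX⟩ := exists_mul_rpow_dist_le_mul_meanRpowDist hZ.fst hXnd hβ o
  obtain ⟨cY, hcY, CY, hCY, hY⟩ := exists_mul_rpow_dist_le_mul_meanRpowDist hZ.snd hYnd hβ o'
  obtain ⟨lX, hlX, hlowX⟩ := exists_le_meanRpowDist (μ := μ) hZ.fst hXnd hβ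
  obtain ⟨lY, hlY, hlowY⟩ := exists_le_meanRpowDist (μ := μ) hZ.snd hYnd hβ
  rcases hmom with h | h | h
  · refine lintegral_eq_top_of_mul_le_mul (mul_ne_zero hcX hlY) hCX (fun ω => ?_) h
    calc cX * lY * ENNReal.ofReal (dist (Z ω).1 o ^ β)
        = cX * ENNReal.ofReal (dist (Z ω).1 o ^ β) * lY := by ring
      _ ≤ CX * meanRpowDist μ (fun ω => (Z ω).1) β (Z ω).1 * lY := mul_le_mul' (hX _) le_rfl
      _ ≤ _ := by rw [mul_assoc]; gcongr; exact hlowY _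
  · refine lintegral_eq_top_of_mul_le_mul (mul_ne_zero hcY hlX) hCY (fun ω => ?_) h
    calc cY * lX * ENNReal.ofReal (dist (Z ω).2 o' ^ β)
        = lX * (cY * ENNReal.ofReal (dist (Z ω).2 o' ^ β)) := by ring
      _ ≤ meanRpowDist μ (fun ω => (Z ω).1) β (Z ω).1
          * (CY * meanRpowDist μ (fun ω => (Z ω).2) β (Z ω).2) := mul_le_mul' (hlowX _) (hY _)
      _ = _ := by ring
  · refine lintegral_eq_top_of_mul_le_mul (mul_ne_zero hcX hcY) (ENNReal.mul_ne_top hCX hCY)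
      (fun ω => ?_) h
    rw [ENNReal.ofReal_mul (Real.rpow_nonneg dist_nonneg _), mul_mul_mul_comm,
      mul_mul_mul_comm CX]
    exact mul_le_mul' (hX _) (hY _)

theorem lintegral_rpow_dist_mul_add_mul_eq_top {U V : Ω → E × F} (hUV : IndepFun U V μ)
    (hU : IdentDistrib U Z μ μ) (hV : IdentDistrib V Z μ μ) (hZ : Measurable Z)
    (hXnd : ∀ x, ¬ ∀ᵐ ω ∂μ, (Z ω).1 = x) (hYnd : ∀ y, ¬ ∀ᵐ ω ∂μ, (Z ω).2 = y) (hβ : 0 ≤ β)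
    {o : E} {o' : F} (hmom : HasInfiniteRpowMoment μ Z o o' β) :
    ∫⁻ ω, ENNReal.ofReal (dist (U ω).1 (V ω).1 ^ β * dist (U ω).2 (V ω).2 ^ β) ∂μ
      + (∫⁻ ω, ENNReal.ofReal (dist (U ω).1 (V ω).1 ^ β) ∂μ)
        * ∫⁻ ω, ENNReal.ofReal (dist (U ω).2 (V ω).2 ^ β) ∂μ = ∞ := by
  have hUm := hU.aemeasurable_fst
  have hVm := hV.aemeasurable_fst
  have hIX : ∫⁻ ω, ENNReal.ofReal (dist (U ω).1 (V ω).1 ^ β) ∂μ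
      = ∫⁻ ω, meanRpowDist μ (fun ω => (Z ω).1) β (Z ω).1 ∂μ :=
    hUV.lintegral_comp_eq_lintegral_lintegral hU hV
      (f := fun u v => ENNReal.ofReal (dist u.1 v.1 ^ β)) (by fun_prop)
  have hIY : ∫⁻ ω, ENNReal.ofReal (dist (U ω).2 (V ω).2 ^ β) ∂μ
      = ∫⁻ ω, meanRpowDist μ (fun ω => (Z ω).2) β (Z ω).2 ∂μ :=
    hUV.lintegral_comp_eq_lintegral_lintegral hU hV
      (f := fun u v => ENNReal.ofReal (dist u.2 v.2 ^ β)) (by fun_prop)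
  obtain ⟨lX, hlX, hlowX⟩ := exists_le_meanRpowDist (μ := μ) hZ.fst hXnd hβ
  obtain ⟨lY, hlY, hlowY⟩ := exists_le_meanRpowDist (μ := μ) hZ.snd hYnd hβ
  have hIX_ne := hIX ▸ lintegral_ne_zero_of_forall_le hlX fun ω => hlowX (Z ω).1
  have hIY_ne := hIY ▸ lintegral_ne_zero_of_forall_le hlY fun ω => hlowY (Z ω).2
  have hdiv : ∫⁻ ω, ENNReal.ofReal (dist (U ω).1 (V ω).1 ^ β)
          * ENNReal.ofReal (dist (U ω).2 (V ω).2 ^ β) ∂μ = ∞ ∨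
      ∫⁻ ω, ENNReal.ofReal (dist (U ω).1 (V ω).1 ^ β) ∂μ = ∞ ∨
      ∫⁻ ω, ENNReal.ofReal (dist (U ω).2 (V ω).2 ^ β) ∂μ = ∞ := by
    obtain ⟨cX, hcX, CX, hCX, hX⟩ := exists_mul_rpow_dist_le_mul_meanRpowDist hZ.fst hXnd hβ o
    obtain ⟨cY, hcY, CY, hCY, hY⟩ := exists_mul_rpow_dist_le_mul_meanRpowDist hZ.snd hYnd hβ o'
    rcases hmom with h | h | h
    · exact .inr <| .inl <| hIX ▸ lintegral_eq_top_of_mul_le_mul hcX hCX (fun ω => hX _) h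
    · exact .inr <| .inr <| hIY ▸ lintegral_eq_top_of_mul_le_mul hcY hCY (fun ω => hY _) h
    obtain ⟨c, hc, C, hC, hXY⟩ := exists_mul_rpow_dist_mul_le_mul_lintegral (μ := μ) hZ hβ o o'
    have hH : ∫⁻ ω, (ENNReal.ofReal (dist (U ω).1 (V ω).1 ^ β) + 1)
        * (ENNReal.ofReal (dist (U ω).2 (V ω).2 ^ β) + 1) ∂μ = ∞ := by
      rw [hUV.lintegral_comp_eq_lintegral_lintegral hU hV
        (f := fun u v => (ENNReal.ofReal (dist u.1 v.1 ^ β) + 1)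
          * (ENNReal.ofReal (dist u.2 v.2 ^ β) + 1)) (by fun_prop)]
      refine lintegral_eq_top_of_mul_le_mul hc hC (fun ω => ?_) h
      rw [ENNReal.ofReal_mul (Real.rpow_nonneg dist_nonneg _)]
      exact hXY _ _
    rw [lintegral_add_one_mul_add_one (by fun_prop) (by fun_prop)] at hH
    simpa [ENNReal.add_eq_top, or_assoc] using hH
  simp_rw [ENNReal.ofReal_mul (Real.rpow_nonneg dist_nonneg _)]
  rcases hdiv with h | h | h <;> simp [h, hIX_ne, hIY_ne]

end DistanceCovariance

/-- Let `β > 0`. Suppose `X` and `Y` are non-degenerate, and at least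
one of `E‖X‖^β`, `E‖Y‖^β`, `E[‖X‖^β‖Y‖^β]` is infinite. Then
`E[d(X₁,X₂)^β d(Y₁,Y₃)^β] = ∞` and also
`E[d(X₁,X₂)^β d(Y₁,Y₂)^β] + E[d(X₁,X₂)^β]·E[d(Y₁,Y₂)^β] = ∞` (expectations of
nonnegative variables taken in `[0,∞]`); so the defining expression of the distance
covariance is of the meaningless form `∞ − ∞`. -/
theorem stmt14 {Ω : Type*} [MeasurableSpace Ω] (μ : Measure Ω) [IsProbabilityMeasure μ]
    {𝒳 𝒴 : Type*} [MetricSpace 𝒳] [TopologicalSpace.SeparableSpace 𝒳]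
    [MeasurableSpace 𝒳] [BorelSpace 𝒳]
    [MetricSpace 𝒴] [TopologicalSpace.SeparableSpace 𝒴]
    [MeasurableSpace 𝒴] [BorelSpace 𝒴]
    (o𝒳 : 𝒳) (o𝒴 : 𝒴) (β : ℝ) (hβ : 0 < β)
    (Z : Ω → 𝒳 × 𝒴) (Zs : Fin 3 → Ω → 𝒳 × 𝒴)
    (hZm : Measurable Z) (hZsm : ∀ i, Measurable (Zs i))
    (hindep : iIndepFun Zs μ)
    (hid : ∀ i, IdentDistrib (Zs i) Z μ μ)
    -- `X` and `Y` are non-degenerate: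
    (hXnd : ∀ x : 𝒳, ¬ (∀ᵐ ω ∂μ, (Z ω).1 = x))
    (hYnd : ∀ y : 𝒴, ¬ (∀ᵐ ω ∂μ, (Z ω).2 = y))
    -- at least one of the three moments is infinite:
    (hmom : (∫⁻ ω, ENNReal.ofReal (dist (Z ω).1 o𝒳 ^ β) ∂μ = ∞) ∨
      (∫⁻ ω, ENNReal.ofReal (dist (Z ω).2 o𝒴 ^ β) ∂μ = ∞) ∨
      (∫⁻ ω, ENNReal.ofReal (dist (Z ω).1 o𝒳 ^ β * dist (Z ω).2 o𝒴 ^ β) ∂μ = ∞)) :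
    (∫⁻ ω, ENNReal.ofReal (dist (Zs 0 ω).1 (Zs 1 ω).1 ^ β
        * dist (Zs 0 ω).2 (Zs 2 ω).2 ^ β) ∂μ = ∞) ∧
    (∫⁻ ω, ENNReal.ofReal (dist (Zs 0 ω).1 (Zs 1 ω).1 ^ β
          * dist (Zs 0 ω).2 (Zs 1 ω).2 ^ β) ∂μ)
        + (∫⁻ ω, ENNReal.ofReal (dist (Zs 0 ω).1 (Zs 1 ω).1 ^ β) ∂μ)
          * (∫⁻ ω, ENNReal.ofReal (dist (Zs 0 ω).2 (Zs 1 ω).2 ^ β) ∂μ) = ∞ := by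
  have := UniformSpace.secondCountable_of_separable 𝒳
  have := UniformSpace.secondCountable_of_separable 𝒴
  refine ⟨?_, lintegral_rpow_dist_mul_add_mul_eq_top (hindep.indepFun (by decide)) (hid 0) (hid 1)
    hZm hXnd hYnd hβ.le hmom⟩
  rw [lintegral_rpow_dist_mul_rpow_dist_eq
    (hindep.indepFun_prodMk hZsm 1 2 0 (by decide) (by decide)).symm
    (hindep.indepFun (by decide)) (hid 0) (hid 1) (hid 2)]
  exact lintegral_meanRpowDist_mul_meanRpowDist_eq_top hZm hXnd hYnd hβ.le hmom
end
end

section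
/- Let 𝒳 be a separable metric space and let 0 < β ≤ 1. If ∫₀^∞ P(‖X‖ > x)² · x^{2β−1} dx < ∞, then E[ĥ_X²] < ∞, and hence the β-distance covariance hDC_β(X,X) := (1/4)·E[ĥ_X²] is finite. -/
/-! Since `d^β` is again a metric for `β ≤ 1`, pairing the four terms of `ĥ` along either
diagonal gives `|ĥ| ≤ 2 min(d(X₁,X₃), d(X₂,X₄))^β`. The two diagonals are independent, and
a half-diagonal exceeds `t` only if one of its endpoints has norm above `t`, so the smaller
half-diagonal exceeds `t` with probability at most `4 P(‖X‖ > t)²`. The layer-cake formula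
turns the hypothesis into `E[min^{2β}] < ∞`. -/

open MeasureTheory ProbabilityTheory
open scoped ENNReal

noncomputable section

theorem abs_dist_sub_dist_add_dist_sub_dist_le {α : Type*} [PseudoMetricSpace α] (a b c d : α) :
    |dist a b - dist b c + dist c d - dist d a| ≤ 2 * min (dist a c) (dist b d) := by
  have h₁ := abs_le.1 (abs_dist_sub_le a c b)
  have h₂ := abs_le.1 (abs_dist_sub_le c a d)
  have h₃ := abs_le.1 (abs_dist_sub_le b d a)
  have h₄ := abs_le.1 (abs_dist_sub_le d b c)
  rw [dist_comm c b] at h₁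
  rw [dist_comm c a, dist_comm a d] at h₂
  rw [dist_comm b a] at h₃
  rw [dist_comm d c, dist_comm d b] at h₄
  rw [mul_min_of_nonneg _ _ zero_le_two, le_min_iff, abs_le, abs_le]
  refine ⟨⟨?_, ?_⟩, ?_, ?_⟩ <;> linarith [h₁.1, h₁.2, h₂.1, h₂.2, h₃.1, h₃.2, h₄.1, h₄.2]

theorem measure_lt_half_dist_le {Ω 𝒳 : Type*} [MeasurableSpace Ω] [PseudoMetricSpace 𝒳]
    (μ : Measure Ω) (o : 𝒳) (Y Z : Ω → 𝒳) (t : ℝ) :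
    μ {ω | t < dist (Y ω) (Z ω) / 2} ≤ μ {ω | t < dist (Y ω) o} + μ {ω | t < dist (Z ω) o} := by
  refine (measure_mono fun ω hω => ?_).trans (measure_union_le _ _)
  by_contra h
  simp only [Set.mem_union, Set.mem_ofPred_eq, not_or, not_lt] at h hω
  linarith [dist_triangle_right (Y ω) (Z ω) o]

theorem ProbabilityTheory.IndepFun.measure_lt_min {Ω : Type*} [MeasurableSpace Ω]
    {μ : Measure Ω} {U V : Ω → ℝ} (h : IndepFun U V μ) (t : ℝ) :
    μ {ω | t < min (U ω) (V ω)} = μ {ω | t < U ω} * μ {ω | t < V ω} := by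
  simp_rw [lt_min_iff]
  exact h.measure_inter_preimage_eq_mul _ _ measurableSet_Ioi measurableSet_Ioi

theorem integrable_rpow_of_lintegral_meas_lt_mul_lt_top {α : Type*} [MeasurableSpace α]
    {μ : Measure α} {f : α → ℝ} (hf0 : 0 ≤ᵐ[μ] f) (hf : AEMeasurable f μ) {p : ℝ} (hp : 0 < p)
    (h : ∫⁻ t in Set.Ioi 0, μ {a | t < f a} * ENNReal.ofReal (t ^ (p - 1)) < ∞) :
    Integrable (fun a => f a ^ p) μ := by
  refine ⟨(hf.pow_const p).aestronglyMeasurable,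
    (hasFiniteIntegral_iff_ofReal (hf0.mono fun a ha => Real.rpow_nonneg ha p)).2 ?_⟩
  rw [lintegral_rpow_eq_lintegral_meas_lt_mul μ hf0 hf hp]
  exact ENNReal.mul_lt_top ENNReal.ofReal_lt_top h

section HalfDiagMin

variable {Ω 𝒳 : Type*} [MetricSpace 𝒳]

def halfDiagMin (X : Fin 4 → Ω → 𝒳) (ω : Ω) : ℝ :=
  min (dist (X 0 ω) (X 2 ω) / 2) (dist (X 1 ω) (X 3 ω) / 2)

theorem halfDiagMin_nonneg (X : Fin 4 → Ω → 𝒳) (ω : Ω) : 0 ≤ halfDiagMin X ω := by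
  unfold halfDiagMin
  positivity

theorem abs_hHat_le {β : ℝ} (hβ0 : 0 < β) (hβ1 : β ≤ 1) (X : Fin 4 → Ω → 𝒳) (ω : Ω) :
    |hHat β X ω| ≤ 2 * (2 * halfDiagMin X ω) ^ β := by
  let s : 𝒳 → Metric.Snowflaking 𝒳 β hβ0 hβ1 := Metric.Snowflaking.toSnowflaking
  have h := abs_dist_sub_dist_add_dist_sub_dist_le (s (X 0 ω)) (s (X 1 ω)) (s (X 2 ω)) (s (X 3 ω))
  simp only [s, Metric.Snowflaking.dist_toSnowflaking_toSnowflaking] at h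
  rwa [hHat, halfDiagMin, min_div_div_right zero_le_two, mul_div_cancel₀ _ two_ne_zero,
    (Real.monotoneOn_rpow_Ici_of_exponent_nonneg hβ0.le).map_min dist_nonneg dist_nonneg]

theorem sq_hHat_le {β : ℝ} (hβ0 : 0 < β) (hβ1 : β ≤ 1) (X : Fin 4 → Ω → 𝒳) (ω : Ω) :
    hHat β X ω ^ 2 ≤ 4 * 2 ^ (2 * β) * halfDiagMin X ω ^ (2 * β) := by
  have hm0 := halfDiagMin_nonneg X ω
  calc hHat β X ω ^ 2 = |hHat β X ω| ^ 2 := (sq_abs _).symm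
    _ ≤ (2 * (2 * halfDiagMin X ω) ^ β) ^ 2 := by gcongr; exact abs_hHat_le hβ0 hβ1 X ω
    _ = 4 * 2 ^ (2 * β) * halfDiagMin X ω ^ (2 * β) := by
      rw [Real.mul_rpow zero_le_two hm0, mul_comm 2 β, Real.rpow_mul zero_le_two,
        Real.rpow_mul hm0]
      norm_num
      ring

variable [MeasurableSpace Ω] [MeasurableSpace 𝒳] [BorelSpace 𝒳] [SecondCountableTopology 𝒳]

theorem measurable_halfDiagMin {X : Fin 4 → Ω → 𝒳} (hX : ∀ i, Measurable (X i)) :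
    Measurable (halfDiagMin X) := by
  unfold halfDiagMin
  fun_prop

theorem measure_lt_halfDiagMin_le {μ : Measure Ω} (o : 𝒳) {X : Ω → 𝒳} {Xs : Fin 4 → Ω → 𝒳}
    (hXs : ∀ i, Measurable (Xs i)) (hindep : iIndepFun Xs μ)
    (hid : ∀ i, IdentDistrib (Xs i) X μ μ) (t : ℝ) :
    μ {ω | t < halfDiagMin Xs ω} ≤ 4 * μ {ω | t < dist (X ω) o} ^ 2 := by
  set G := μ {ω | t < dist (X ω) o}
  have hcopy (i : Fin 4) : μ {ω | t < dist (Xs i ω) o} = G :=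
    ((hid i).comp (continuous_id.dist continuous_const).measurable).measure_mem_eq
      measurableSet_Ioi
  have hhalf (i j : Fin 4) : μ {ω | t < dist (Xs i ω) (Xs j ω) / 2} ≤ 2 * G :=
    (measure_lt_half_dist_le μ o _ _ t).trans_eq (by rw [hcopy, hcopy, two_mul])
  have hdiag : IndepFun (fun ω => dist (Xs 0 ω) (Xs 2 ω) / 2)
      (fun ω => dist (Xs 1 ω) (Xs 3 ω) / 2) μ :=
    (hindep.indepFun_prodMk_prodMk hXs 0 2 1 3 (by decide) (by decide) (by decide)
      (by decide)).comp (measurable_dist.div_const 2) (measurable_dist.div_const 2)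
  calc μ {ω | t < halfDiagMin Xs ω}
      = μ {ω | t < dist (Xs 0 ω) (Xs 2 ω) / 2} * μ {ω | t < dist (Xs 1 ω) (Xs 3 ω) / 2} :=
        hdiag.measure_lt_min t
    _ ≤ 2 * G * (2 * G) := mul_le_mul' (hhalf 0 2) (hhalf 1 3)
    _ = 4 * G ^ 2 := by ring

end HalfDiagMin

theorem stmt15_general {Ω : Type*} [MeasurableSpace Ω] (μ : Measure Ω)
    {𝒳 : Type*} [MetricSpace 𝒳] [TopologicalSpace.SeparableSpace 𝒳]
    [MeasurableSpace 𝒳] [BorelSpace 𝒳] (o : 𝒳)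
    (β : ℝ) (hβ0 : 0 < β) (hβ1 : β ≤ 1)
    (X : Ω → 𝒳) (Xs : Fin 4 → Ω → 𝒳)
    (hXsm : ∀ i, Measurable (Xs i))
    (hindep : iIndepFun Xs μ)
    (hid : ∀ i, IdentDistrib (Xs i) X μ μ)
    (htail : ∫⁻ x in Set.Ioi (0 : ℝ),
        (μ {ω | x < dist (X ω) o}) ^ 2 * ENNReal.ofReal (x ^ (2 * β - 1)) < ∞) :
    Integrable (fun ω => hHat β Xs ω ^ 2) μ := by
  have : SecondCountableTopology 𝒳 := UniformSpace.secondCountable_of_separable 𝒳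
  have hm : Integrable (fun ω => halfDiagMin Xs ω ^ (2 * β)) μ := by
    refine integrable_rpow_of_lintegral_meas_lt_mul_lt_top
      (ae_of_all _ (halfDiagMin_nonneg Xs)) (measurable_halfDiagMin hXsm).aemeasurable
      (by positivity) ?_
    calc _ ≤ ∫⁻ t in Set.Ioi 0,
          4 * (μ {ω | t < dist (X ω) o} ^ 2 * ENNReal.ofReal (t ^ (2 * β - 1))) :=
          lintegral_mono fun t => by
            rw [← mul_assoc]
            gcongr
            exact measure_lt_halfDiagMin_le o hXsm hindep hid t
      _ < ∞ := by
          rw [lintegral_const_mul' _ _ (by norm_num)]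
          exact ENNReal.mul_lt_top (by norm_num) htail
  refine (hm.const_mul (4 * 2 ^ (2 * β))).mono' (by unfold hHat; fun_prop)
    (ae_of_all _ fun ω => ?_)
  rw [Real.norm_of_nonneg (sq_nonneg _)]
  exact sq_hHat_le hβ0 hβ1 Xs ω

/-- Let `𝒳` be a separable metric space and `0 < β ≤ 1`. If
`∫₀^∞ P(‖X‖ > x)² x^{2β−1} dx < ∞`, then `E[ĥ_X²] < ∞`, hence
`hDC_β(X,X) = (1/4)E[ĥ_X²]` is finite. -/
theorem stmt15 {Ω : Type*} [MeasurableSpace Ω] (μ : Measure Ω) [IsProbabilityMeasure μ]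
    {𝒳 : Type*} [MetricSpace 𝒳] [TopologicalSpace.SeparableSpace 𝒳]
    [MeasurableSpace 𝒳] [BorelSpace 𝒳] (o : 𝒳)
    (β : ℝ) (hβ0 : 0 < β) (hβ1 : β ≤ 1)
    (X : Ω → 𝒳) (Xs : Fin 4 → Ω → 𝒳)
    (hXm : Measurable X) (hXsm : ∀ i, Measurable (Xs i))
    (hindep : iIndepFun Xs μ)
    (hid : ∀ i, IdentDistrib (Xs i) X μ μ)
    (htail : ∫⁻ x in Set.Ioi (0 : ℝ),
        (μ {ω | x < dist (X ω) o}) ^ 2 * ENNReal.ofReal (x ^ (2 * β - 1)) < ∞) :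
    Integrable (fun ω => hHat β Xs ω ^ 2) μ :=
  stmt15_general μ o β hβ0 hβ1 X Xs hXsm hindep hid htail
end
end

section
/- Let 𝒳 be a separable metric space, let 0 < β ≤ 1, and let p > 0. Then E[|ĥ_X|^p] < ∞ if and only if E[(‖X₁‖^β + ‖X₂‖^β − d(X₁,X₂)^β)^p] < ∞ (note that ‖X₁‖^β + ‖X₂‖^β − d(X₁,X₂)^β ≥ 0 since β ≤ 1). -/
/-!
The defect `g(x, y) = ‖x‖^β + ‖y‖^β − d(x, y)^β` satisfies `0 ≤ g(x, y) ≤ 2‖y‖^β` by the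
triangle inequality for the snowflake metric `d^β` (`β ≤ 1`), and the norms cancel around the
4-cycle: `ĥ = −g(X₁,X₂) + g(X₂,X₃) − g(X₃,X₄) + g(X₄,X₁)`.

Every pair of distinct copies has the law of `(X₁, X₂)`, so `g(X₁,X₂) ∈ Lᵖ` gives `ĥ ∈ Lᵖ`
(`Lᵖ` is a vector space also for `p < 1`). Conversely, if `ĥ ∈ Lᵖ` then by Fubini there are
points `c₃, c₄` with `ĥ(X₁, X₂, c₃, c₄) ∈ Lᵖ`; in the identity for this slice the three defects
involving `c₃, c₄` are bounded, hence `g(X₁,X₂) ∈ Lᵖ`.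
-/

open MeasureTheory ProbabilityTheory

noncomputable section

open scoped ENNReal

theorem dist_rpow_le_add {𝒳 : Type*} [PseudoMetricSpace 𝒳] {β : ℝ} (hβ0 : 0 ≤ β)
    (hβ1 : β ≤ 1) (x y z : 𝒳) : dist x z ^ β ≤ dist x y ^ β + dist y z ^ β :=
  (Real.rpow_le_rpow dist_nonneg (dist_triangle x y z) hβ0).trans
    (Real.rpow_add_le_add_rpow dist_nonneg dist_nonneg hβ0 hβ1)

section Defect

variable {𝒳 : Type*} [PseudoMetricSpace 𝒳] (β : ℝ) (o : 𝒳)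

def defect (x y : 𝒳) : ℝ :=
  dist x o ^ β + dist y o ^ β - dist x y ^ β

theorem defect_comm (x y : 𝒳) : defect β o x y = defect β o y x := by
  simp only [defect, dist_comm x y, add_comm]

variable {β}

theorem defect_nonneg (hβ0 : 0 ≤ β) (hβ1 : β ≤ 1) (x y : 𝒳) : 0 ≤ defect β o x y := by
  have := dist_rpow_le_add hβ0 hβ1 x o y
  rw [dist_comm o y] at this
  simp only [defect]
  linarith

theorem defect_le (hβ0 : 0 ≤ β) (hβ1 : β ≤ 1) (x y : 𝒳) :
    defect β o x y ≤ 2 * dist y o ^ β := by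
  have := dist_rpow_le_add hβ0 hβ1 x y o
  simp only [defect]
  linarith

theorem abs_defect_le (hβ0 : 0 ≤ β) (hβ1 : β ≤ 1) (x y : 𝒳) :
    |defect β o x y| ≤ 2 * dist y o ^ β :=
  abs_le.2 ⟨(neg_nonpos.2 (by positivity)).trans (defect_nonneg o hβ0 hβ1 x y),
    defect_le o hβ0 hβ1 x y⟩

theorem measurable_defect [MeasurableSpace 𝒳] [BorelSpace 𝒳] [SecondCountableTopology 𝒳] :
    Measurable fun z : 𝒳 × 𝒳 => defect β o z.1 z.2 := by
  unfold defect
  fun_prop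

end Defect

theorem four_point_eq_defect {𝒳 : Type*} [PseudoMetricSpace 𝒳] (β : ℝ) (o x₀ x₁ x₂ x₃ : 𝒳) :
    dist x₀ x₁ ^ β - dist x₁ x₂ ^ β + dist x₂ x₃ ^ β - dist x₃ x₀ ^ β =
      -defect β o x₀ x₁ + defect β o x₁ x₂ - defect β o x₂ x₃ + defect β o x₃ x₀ := by
  simp only [defect]
  ring

theorem hHat_eq_defect {Ω 𝒳 : Type*} [MetricSpace 𝒳] (β : ℝ) (o : 𝒳) (Xs : Fin 4 → Ω → 𝒳) :
    hHat β Xs = fun ω => -defect β o (Xs 0 ω) (Xs 1 ω) + defect β o (Xs 1 ω) (Xs 2 ω)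
      - defect β o (Xs 2 ω) (Xs 3 ω) + defect β o (Xs 3 ω) (Xs 0 ω) :=
  funext fun _ => four_point_eq_defect β o _ _ _ _

theorem ProbabilityTheory.IndepFun.exists_memLp_slice {Ω γ δ E : Type*} [MeasurableSpace Ω]
    {μ : Measure Ω} [IsProbabilityMeasure μ] [MeasurableSpace γ] [MeasurableSpace δ]
    [NormedAddCommGroup E]
    {Z : Ω → γ} {Y : Ω → δ} (hZ : Measurable Z) (hY : Measurable Y) (hZY : IndepFun Z Y μ)
    {f : γ → δ → E} (hf : StronglyMeasurable (Function.uncurry f)) {q : ℝ≥0∞} (hq0 : q ≠ 0)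
    (hq : q ≠ ∞) (h : MemLp (fun ω => f (Z ω) (Y ω)) q μ) :
    ∃ c, MemLp (fun ω => f c (Y ω)) q μ := by
  have hlaw : μ.map (fun ω => (Z ω, Y ω)) = (μ.map Z).prod (μ.map Y) :=
    hZY.map_prod_eq_prod_map_map hZ.aemeasurable hY.aemeasurable
  have hprod : MemLp (Function.uncurry f) q ((μ.map Z).prod (μ.map Y)) := by
    rw [← hlaw]
    exact (memLp_map_measure_iff hf.aestronglyMeasurable (hZ.prodMk hY).aemeasurable).2 h
  rw [← integrable_norm_rpow_iff hf.aestronglyMeasurable hq0 hq] at hprod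
  have := Measure.isProbabilityMeasure_map (μ := μ) hZ.aemeasurable
  obtain ⟨c, hc⟩ := hprod.prod_right_ae.exists
  have hfc : StronglyMeasurable (f c) := hf.comp_measurable measurable_prodMk_left
  exact ⟨c, (memLp_map_measure_iff hfc.aestronglyMeasurable hY.aemeasurable).1 <|
    (integrable_norm_rpow_iff hfc.aestronglyMeasurable hq0 hq).1 hc⟩

theorem integrable_abs_rpow_iff_memLp {Ω : Type*} [MeasurableSpace Ω] {μ : Measure Ω}
    {f : Ω → ℝ} (hf : AEStronglyMeasurable f μ) {p : ℝ} (hp : 0 < p) :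
    Integrable (fun ω => |f ω| ^ p) μ ↔ MemLp f (ENNReal.ofReal p) μ := by
  rw [← integrable_norm_rpow_iff hf (by simpa using hp) ENNReal.ofReal_ne_top,
    ENNReal.toReal_ofReal hp.le]
  rfl

section FourCopies

variable {Ω 𝒳 : Type*} [MeasurableSpace Ω] {μ : Measure Ω} [IsProbabilityMeasure μ]
  [MetricSpace 𝒳] [MeasurableSpace 𝒳] [BorelSpace 𝒳] [SecondCountableTopology 𝒳]
  {β : ℝ} (o : 𝒳) {q : ℝ≥0∞}

theorem memLp_defect_const (hβ0 : 0 ≤ β) (hβ1 : β ≤ 1) {Y : Ω → 𝒳} (hY : Measurable Y)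
    (c : 𝒳) : MemLp (fun ω => defect β o (Y ω) c) q μ :=
  .of_bound ((measurable_defect o).comp (hY.prodMk measurable_const)).aestronglyMeasurable _
    (ae_of_all _ fun _ => abs_defect_le o hβ0 hβ1 _ c)

theorem memLp_hHat_of_memLp_defect {X : Ω → 𝒳} {Xs : Fin 4 → Ω → 𝒳}
    (hindep : iIndepFun Xs μ) (hid : ∀ i, IdentDistrib (Xs i) X μ μ)
    (h : MemLp (fun ω => defect β o (Xs 0 ω) (Xs 1 ω)) q μ) : MemLp (hHat β Xs) q μ := by
  have hpair : ∀ i j, i ≠ j → MemLp (fun ω => defect β o (Xs i ω) (Xs j ω)) q μ :=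
    fun i j hij => ((((hid 0).trans (hid i).symm).prodMk ((hid 1).trans (hid j).symm)
      (hindep.indepFun (by decide)) (hindep.indepFun hij)).comp (measurable_defect o)).memLp_snd h
  rw [hHat_eq_defect β o]
  exact (((hpair 0 1 (by decide)).neg.add (hpair 1 2 (by decide))).sub
    (hpair 2 3 (by decide))).add (hpair 3 0 (by decide))

theorem memLp_defect_of_memLp_hHat (hβ0 : 0 ≤ β) (hβ1 : β ≤ 1) {Xs : Fin 4 → Ω → 𝒳}
    (hXsm : ∀ i, Measurable (Xs i)) (hindep : iIndepFun Xs μ) (hq0 : q ≠ 0) (hq : q ≠ ∞)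
    (h : MemLp (hHat β Xs) q μ) : MemLp (fun ω => defect β o (Xs 0 ω) (Xs 1 ω)) q μ := by
  obtain ⟨⟨c₂, c₃⟩, hc⟩ :=
    (hindep.indepFun_prodMk_prodMk hXsm 2 3 0 1 (by decide) (by decide) (by decide)
      (by decide)).exists_memLp_slice ((hXsm 2).prodMk (hXsm 3)) ((hXsm 0).prodMk (hXsm 1))
      (f := fun c x => dist x.1 x.2 ^ β - dist x.2 c.1 ^ β + dist c.1 c.2 ^ β - dist c.2 x.1 ^ β)
      (by fun_prop) hq0 hq h
  convert ((hc.neg.add (memLp_defect_const o hβ0 hβ1 (hXsm 1) c₂)).sub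
    (memLp_const (defect β o c₂ c₃))).add (memLp_defect_const o hβ0 hβ1 (hXsm 0) c₃) using 1
  funext ω
  have := four_point_eq_defect β o (Xs 0 ω) (Xs 1 ω) c₂ c₃
  rw [defect_comm β o c₃] at this
  simp only [Pi.add_apply, Pi.sub_apply, Pi.neg_apply]
  linarith

end FourCopies

theorem stmt16_general {Ω : Type*} [MeasurableSpace Ω] (μ : Measure Ω) [IsProbabilityMeasure μ]
    {𝒳 : Type*} [MetricSpace 𝒳] [TopologicalSpace.SeparableSpace 𝒳]
    [MeasurableSpace 𝒳] [BorelSpace 𝒳] (o : 𝒳)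
    (β : ℝ) (hβ0 : 0 < β) (hβ1 : β ≤ 1) (p : ℝ) (hp : 0 < p)
    (X : Ω → 𝒳) (Xs : Fin 4 → Ω → 𝒳)
    (hXsm : ∀ i, Measurable (Xs i))
    (hindep : iIndepFun Xs μ)
    (hid : ∀ i, IdentDistrib (Xs i) X μ μ) :
    Integrable (fun ω => |hHat β Xs ω| ^ p) μ ↔
      Integrable (fun ω =>
        (dist (Xs 0 ω) o ^ β + dist (Xs 1 ω) o ^ β - dist (Xs 0 ω) (Xs 1 ω) ^ β) ^ p) μ := by
  have hdefect : ∀ i j, Measurable fun ω => defect β o (Xs i ω) (Xs j ω) :=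
    fun i j => (measurable_defect o).comp ((hXsm i).prodMk (hXsm j))
  have hHat_meas : AEStronglyMeasurable (hHat β Xs) μ := by
    rw [hHat_eq_defect β o]
    exact ((((hdefect 0 1).neg.add (hdefect 1 2)).sub (hdefect 2 3)).add
      (hdefect 3 0)).aestronglyMeasurable
  have habs : (fun ω => defect β o (Xs 0 ω) (Xs 1 ω) ^ p) =
      fun ω => |defect β o (Xs 0 ω) (Xs 1 ω)| ^ p := by
    simp only [abs_of_nonneg (defect_nonneg o hβ0.le hβ1 _ _)]
  change _ ↔ Integrable (fun ω => defect β o (Xs 0 ω) (Xs 1 ω) ^ p) μ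
  rw [habs, integrable_abs_rpow_iff_memLp hHat_meas hp,
    integrable_abs_rpow_iff_memLp (hdefect 0 1).aestronglyMeasurable hp]
  exact ⟨memLp_defect_of_memLp_hHat o hβ0.le hβ1 hXsm hindep (by simpa using hp)
    ENNReal.ofReal_ne_top, memLp_hHat_of_memLp_defect o hindep hid⟩

/-- Let `𝒳` be a separable metric space, `0 < β ≤ 1`, `p > 0`. Then
`E[|ĥ_X|^p] < ∞` if and only if `E[(‖X₁‖^β + ‖X₂‖^β − d(X₁,X₂)^β)^p] < ∞`
(the latter base being nonnegative since `β ≤ 1`). -/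
theorem stmt16 {Ω : Type*} [MeasurableSpace Ω] (μ : Measure Ω) [IsProbabilityMeasure μ]
    {𝒳 : Type*} [MetricSpace 𝒳] [TopologicalSpace.SeparableSpace 𝒳]
    [MeasurableSpace 𝒳] [BorelSpace 𝒳] (o : 𝒳)
    (β : ℝ) (hβ0 : 0 < β) (hβ1 : β ≤ 1) (p : ℝ) (hp : 0 < p)
    (X : Ω → 𝒳) (Xs : Fin 4 → Ω → 𝒳)
    (hXm : Measurable X) (hXsm : ∀ i, Measurable (Xs i))
    (hindep : iIndepFun Xs μ)
    (hid : ∀ i, IdentDistrib (Xs i) X μ μ) :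
    Integrable (fun ω => |hHat β Xs ω| ^ p) μ ↔
      Integrable (fun ω =>
        (dist (Xs 0 ω) o ^ β + dist (Xs 1 ω) o ^ β - dist (Xs 0 ω) (Xs 1 ω) ^ β) ^ p) μ :=
  stmt16_general μ o β hβ0 hβ1 p hp X Xs hXsm hindep hid
end
end

section
/- Let β > 0 and suppose E|ĥ_X| < ∞. Then there is a Borel measurable function g : 𝒳×𝒳 → ℝ such that g(X₁,X₂) is a version of the conditional expectation E(ĥ_X | X₁,X₂), and almost surely ĥ_X = g(X₁,X₂) − g(X₂,X₃) + g(X₃,X₄) − g(X₄,X₁). Consequently, for every p ≥ 1, ĥ_X ∈ L^p if and only if g(X₁,X₂) ∈ L^p. -/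
/-!
Write `h(x, y) = d(x, y)^β`, so that `ĥ_X` is the alternating cyclic sum of `h` along
`X₁ X₂ X₃ X₄`. This sum does not see kernels of the form `a(x) + a(y) + c`. Hence `h` may be
replaced by `K = h − f_w(x) − f_w(y)`, centred at a point `w = (w₁, w₂)` through
`f_w(x) = (h(x, w₁) + h(w₂, x) − h(w₁, w₂)) / 2`. Every value `K(z)` is an average of two values
of `ĥ`, so by Fubini `K` is `ν ⊗ ν`-integrable (`ν` the law of `X`) for a.e. `w`, even when `h`
is not.
By independence, `E(ĥ_X | X₁, X₂)` is the integral of `ĥ` over the law of `(X₃, X₄)`, and for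
integrable `K` that integral is the degenerate Hoeffding component
`g = K − b(x) − b(y) + E K` with `b(x) = ∫ K(x, y) dν(y)`. It has the same cyclic sum.
For `p ≥ 1`, conditional expectation is an `L^p` contraction, which gives one direction. The
four terms `g(Xᵢ, Xⱼ)` all have the same law, which gives the other.
-/

open MeasureTheory ProbabilityTheory

noncomputable section

open scoped ENNReal

-- The four points are grouped as `((x₁, x₂), (x₃, x₄))`, matching the law `(ν ⊗ ν) ⊗ (ν ⊗ ν)`.
def cycleSum {α : Type*} (h : α × α → ℝ) (x : (α × α) × (α × α)) : ℝ :=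
  h x.1 - h (x.1.2, x.2.1) + h x.2 - h (x.2.2, x.1.1)

section Kernel

variable {α : Type*} (h : α × α → ℝ)

theorem cycleSum_add_separable (a : α → ℝ) (c : ℝ) :
    cycleSum (fun z => h z + (a z.1 + a z.2 + c)) = cycleSum h := by
  funext x
  simp only [cycleSum]
  ring

def centerAt (w : α × α) (z : α × α) : ℝ :=
  h z - (h (z.1, w.1) + h (w.2, z.1) - h w) / 2 - (h (z.2, w.1) + h (w.2, z.2) - h w) / 2

theorem cycleSum_centerAt (w : α × α) : cycleSum (centerAt h w) = cycleSum h := by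
  rw [← cycleSum_add_separable h (fun x => -(h (x, w.1) + h (w.2, x) - h w) / 2) 0]
  congr 1
  funext z
  simp only [centerAt]
  ring

variable {h}

theorem centerAt_eq_half (hsymm : ∀ x y, h (x, y) = h (y, x)) (w z : α × α) :
    centerAt h w z = (cycleSum h (z, w) + cycleSum h (z.swap, w)) / 2 := by
  obtain ⟨x, y⟩ := z
  simp only [centerAt, cycleSum, Prod.swap_prod_mk]
  rw [hsymm y x]
  ring

theorem centerAt_symm (hsymm : ∀ x y, h (x, y) = h (y, x)) (w : α × α) (x y : α) :
    centerAt h w (x, y) = centerAt h w (y, x) := by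
  simp only [centerAt]
  rw [hsymm x y]
  ring

end Kernel

section Decomposition

variable {α : Type*} [MeasurableSpace α] {ν : Measure α} {h : α × α → ℝ}

theorem Measurable.cycleSum (hh : Measurable h) : Measurable (cycleSum h) := by
  unfold _root_.cycleSum
  fun_prop

theorem exists_integrable_centerAt [IsProbabilityMeasure ν] (hsymm : ∀ x y, h (x, y) = h (y, x))
    (hint : Integrable (cycleSum h) ((ν.prod ν).prod (ν.prod ν))) :
    ∃ w, Integrable (centerAt h w) (ν.prod ν) := by
  obtain ⟨w, hw⟩ := hint.prod_left_ae.exists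
  refine ⟨w, ?_⟩
  rw [show centerAt h w = _ from funext (centerAt_eq_half hsymm w)]
  exact (hw.add hw.swap).div_const 2

variable (ν) in
def hoeffdingDegenerate (K : α × α → ℝ) (z : α × α) : ℝ :=
  K z - ∫ y, K (z.1, y) ∂ν - ∫ y, K (z.2, y) ∂ν + ∫ p, K p ∂(ν.prod ν)

variable (ν) in
theorem cycleSum_hoeffdingDegenerate (K : α × α → ℝ) :
    cycleSum (hoeffdingDegenerate ν K) = cycleSum K := by
  rw [← cycleSum_add_separable K (fun x => -∫ y, K (x, y) ∂ν) (∫ p, K p ∂(ν.prod ν))]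
  congr 1
  funext z
  simp only [hoeffdingDegenerate]
  ring

theorem measurable_hoeffdingDegenerate [SFinite ν] {K : α × α → ℝ} (hK : Measurable K) :
    Measurable (hoeffdingDegenerate ν K) := by
  have hb : Measurable fun x => ∫ y, K (x, y) ∂ν :=
    hK.stronglyMeasurable.integral_prod_right'.measurable
  exact ((hK.sub (hb.comp measurable_fst)).sub (hb.comp measurable_snd)).add measurable_const

theorem integral_cycleSum_ae_eq_hoeffdingDegenerate [IsProbabilityMeasure ν] {K : α × α → ℝ}
    (hK : Integrable K (ν.prod ν)) (hsymm : ∀ x y, K (x, y) = K (y, x)) :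
    (fun z => ∫ w, cycleSum K (z, w) ∂(ν.prod ν)) =ᵐ[ν.prod ν] hoeffdingDegenerate ν K := by
  have hsec : ∀ᵐ x ∂ν, Integrable (fun y => K (x, y)) ν := hK.prod_right_ae
  filter_upwards [Measure.quasiMeasurePreserving_fst.ae hsec,
    Measure.quasiMeasurePreserving_snd.ae hsec] with z h₁ h₂
  have hcycle : (fun w => cycleSum K (z, w))
      = fun w => K z - K (z.2, w.1) + K w - K (z.1, w.2) := by
    funext w
    simp only [cycleSum, hsymm w.2 z.1]
  have i₁ : Integrable (fun w : α × α => K z - K (z.2, w.1)) (ν.prod ν) :=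
    (integrable_const _).sub (h₂.comp_fst ν)
  have i₂ : Integrable (fun w : α × α => K z - K (z.2, w.1) + K w) (ν.prod ν) := i₁.add hK
  have e₁ := integral_fun_fst (μ := ν) (ν := ν) fun y => K (z.2, y)
  have e₂ := integral_fun_snd (μ := ν) (ν := ν) fun y => K (z.1, y)
  rw [hcycle, integral_sub i₂ (h₁.comp_snd ν), integral_add i₁ hK,
    integral_sub (integrable_const _) (h₂.comp_fst ν), integral_const, e₁, e₂]
  simp only [probReal_univ, one_smul, hoeffdingDegenerate]
  ring

theorem exists_cycleSum_eq_of_integrable [IsProbabilityMeasure ν] (hh : Measurable h)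
    (hsymm : ∀ x y, h (x, y) = h (y, x))
    (hint : Integrable (cycleSum h) ((ν.prod ν).prod (ν.prod ν))) :
    ∃ g : α × α → ℝ, Measurable g ∧ cycleSum g = cycleSum h ∧
      (fun z => ∫ w, cycleSum h (z, w) ∂(ν.prod ν)) =ᵐ[ν.prod ν] g := by
  obtain ⟨w, hw⟩ := exists_integrable_centerAt hsymm hint
  have hwm : Measurable (centerAt h w) := by
    unfold centerAt
    fun_prop
  refine ⟨hoeffdingDegenerate ν (centerAt h w), measurable_hoeffdingDegenerate hwm,
    by rw [cycleSum_hoeffdingDegenerate, cycleSum_centerAt], ?_⟩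
  simpa only [cycleSum_centerAt] using
    integral_cycleSum_ae_eq_hoeffdingDegenerate hw (centerAt_symm hsymm w)

end Decomposition

theorem condExp_comp_prodMk_ae_eq_integral {Ω α β E : Type*} {mΩ : MeasurableSpace Ω}
    [mα : MeasurableSpace α] [MeasurableSpace β] [NormedAddCommGroup E] [NormedSpace ℝ E]
    [CompleteSpace E] {μ : Measure Ω} [IsFiniteMeasure μ] {Z : Ω → α} {W : Ω → β}
    (hZ : Measurable Z) (hW : Measurable W) (hZW : IndepFun Z W μ) {F : α × β → E}
    (hF : StronglyMeasurable F) (hFint : Integrable F ((μ.map Z).prod (μ.map W))) :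
    μ[fun ω => F (Z ω, W ω) | mα.comap Z] =ᵐ[μ] fun ω => ∫ y, F (Z ω, y) ∂(μ.map W) := by
  have hZWm : Measurable fun ω => (Z ω, W ω) := hZ.prodMk hW
  have hmap : μ.map (fun ω => (Z ω, W ω)) = (μ.map Z).prod (μ.map W) :=
    (indepFun_iff_map_prod_eq_prod_map_map hZ.aemeasurable hW.aemeasurable).1 hZW
  have hG : StronglyMeasurable fun x => ∫ y, F (x, y) ∂(μ.map W) :=
    hF.integral_prod_right'
  have hGint : Integrable (fun ω => ∫ y, F (Z ω, y) ∂(μ.map W)) μ :=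
    (integrable_map_measure hG.aestronglyMeasurable hZ.aemeasurable).1
      hFint.integral_prod_left
  refine (ae_eq_condExp_of_forall_setIntegral_eq hZ.comap_le
    ((integrable_map_measure hF.aestronglyMeasurable hZWm.aemeasurable).1 (hmap ▸ hFint))
    (fun _ _ _ => hGint.integrableOn) ?_
    (hG.comp_measurable (comap_measurable Z)).aestronglyMeasurable).symm
  rintro _ ⟨s, hs, rfl⟩ -
  calc ∫ ω in Z ⁻¹' s, ∫ y, F (Z ω, y) ∂(μ.map W) ∂μ
      = ∫ x in s, ∫ y, F (x, y) ∂(μ.map W) ∂(μ.map Z) :=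
        (setIntegral_map hs hG.aestronglyMeasurable hZ.aemeasurable).symm
    _ = ∫ p in s ×ˢ Set.univ, F p ∂(μ.map fun ω => (Z ω, W ω)) := by
        rw [hmap, setIntegral_prod _ hFint.integrableOn, Measure.restrict_univ]
    _ = ∫ ω in Z ⁻¹' s, F (Z ω, W ω) ∂μ := by
        rw [setIntegral_map (hs.prod .univ) (hmap ▸ hF.aestronglyMeasurable) hZWm.aemeasurable,
          Set.mk_preimage_prod, Set.preimage_univ, Set.inter_univ]

theorem ProbabilityTheory.iIndepFun.map_prodMk_eq_prod {Ω ι α : Type*} [MeasurableSpace Ω]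
    [MeasurableSpace α] {μ : Measure Ω} [IsProbabilityMeasure μ] {ν : Measure α}
    {Xs : ι → Ω → α} (hindep : iIndepFun Xs μ) (hXsm : ∀ i, Measurable (Xs i))
    (hlaw : ∀ i, μ.map (Xs i) = ν) {i j : ι} (hij : i ≠ j) :
    μ.map (fun ω => (Xs i ω, Xs j ω)) = ν.prod ν := by
  rw [(indepFun_iff_map_prod_eq_prod_map_map (hXsm i).aemeasurable
    (hXsm j).aemeasurable).1 (hindep.indepFun hij), hlaw, hlaw]

section FourCopies

variable {Ω α : Type*} [MeasurableSpace Ω] [MeasurableSpace α] {μ : Measure Ω}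
  [IsProbabilityMeasure μ] {ν : Measure α} {Xs : Fin 4 → Ω → α}

theorem memLp_cycleSum_iff (hindep : iIndepFun Xs μ) (hXsm : ∀ i, Measurable (Xs i))
    (hlaw : ∀ i, μ.map (Xs i) = ν) {g : α × α → ℝ} (hg : Measurable g)
    (hce : (fun ω => g (Xs 0 ω, Xs 1 ω)) =ᵐ[μ] μ[fun ω => cycleSum g ((Xs 0 ω, Xs 1 ω),
      (Xs 2 ω, Xs 3 ω)) | MeasurableSpace.comap (fun ω => (Xs 0 ω, Xs 1 ω)) inferInstance])
    {p : ℝ≥0∞} (hp : 1 ≤ p) :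
    MemLp (fun ω => cycleSum g ((Xs 0 ω, Xs 1 ω), (Xs 2 ω, Xs 3 ω))) p μ ↔
      MemLp (fun ω => g (Xs 0 ω, Xs 1 ω)) p μ := by
  refine ⟨fun hF => (hF.condExp hp).ae_eq hce.symm, fun hg₀₁ => ?_⟩
  have hgij : ∀ i j : Fin 4, i ≠ j → MemLp (fun ω => g (Xs i ω, Xs j ω)) p μ := by
    intro i j hij
    have hpair : IdentDistrib (fun ω => (Xs 0 ω, Xs 1 ω)) (fun ω => (Xs i ω, Xs j ω)) μ μ :=
      ⟨((hXsm 0).prodMk (hXsm 1)).aemeasurable, ((hXsm i).prodMk (hXsm j)).aemeasurable, by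
        rw [hindep.map_prodMk_eq_prod hXsm hlaw (by decide),
          hindep.map_prodMk_eq_prod hXsm hlaw hij]⟩
    exact (hpair.comp hg).memLp_snd hg₀₁
  exact (((hgij 0 1 (by decide)).sub (hgij 1 2 (by decide))).add
    (hgij 2 3 (by decide))).sub (hgij 3 0 (by decide))

theorem exists_condExp_cycleSum_eq (hindep : iIndepFun Xs μ) (hXsm : ∀ i, Measurable (Xs i))
    (hlaw : ∀ i, μ.map (Xs i) = ν) {h : α × α → ℝ} (hh : Measurable h)
    (hsymm : ∀ x y, h (x, y) = h (y, x))
    (hint : Integrable (fun ω => cycleSum h ((Xs 0 ω, Xs 1 ω), (Xs 2 ω, Xs 3 ω))) μ) :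
    ∃ g : α × α → ℝ, Measurable g ∧ cycleSum g = cycleSum h ∧
      (fun ω => g (Xs 0 ω, Xs 1 ω)) =ᵐ[μ] μ[fun ω => cycleSum h ((Xs 0 ω, Xs 1 ω),
        (Xs 2 ω, Xs 3 ω)) | MeasurableSpace.comap (fun ω => (Xs 0 ω, Xs 1 ω)) inferInstance] := by
  have hP : ∀ i j, Measurable fun ω => (Xs i ω, Xs j ω) := fun i j => (hXsm i).prodMk (hXsm j)
  have hP₀₁ := hindep.map_prodMk_eq_prod hXsm hlaw (i := 0) (j := 1) (by decide)
  have hP₂₃ := hindep.map_prodMk_eq_prod hXsm hlaw (i := 2) (j := 3) (by decide)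
  have : IsProbabilityMeasure ν :=
    hlaw 0 ▸ Measure.isProbabilityMeasure_map (hXsm 0).aemeasurable
  have hindep₀₁₂₃ := hindep.indepFun_prodMk_prodMk hXsm 0 1 2 3
    (by decide) (by decide) (by decide) (by decide)
  have hmap : μ.map (fun ω => ((Xs 0 ω, Xs 1 ω), (Xs 2 ω, Xs 3 ω)))
      = (ν.prod ν).prod (ν.prod ν) := by
    rw [(indepFun_iff_map_prod_eq_prod_map_map (hP 0 1).aemeasurable
      (hP 2 3).aemeasurable).1 hindep₀₁₂₃, hP₀₁, hP₂₃]
  have hhint : Integrable (cycleSum h) ((ν.prod ν).prod (ν.prod ν)) := by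
    rw [← hmap]
    exact (integrable_map_measure hh.cycleSum.aestronglyMeasurable
      ((hP 0 1).prodMk (hP 2 3)).aemeasurable).2 hint
  obtain ⟨g, hgm, hcycle, hG⟩ := exists_cycleSum_eq_of_integrable hh hsymm hhint
  refine ⟨g, hgm, hcycle, ?_⟩
  have hce := condExp_comp_prodMk_ae_eq_integral (hP 0 1) (hP 2 3) hindep₀₁₂₃
    hh.cycleSum.stronglyMeasurable (by rwa [hP₀₁, hP₂₃])
  rw [hP₂₃] at hce
  have hGg : (fun ω => g (Xs 0 ω, Xs 1 ω)) =ᵐ[μ]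
      fun ω => ∫ w, cycleSum h ((Xs 0 ω, Xs 1 ω), w) ∂(ν.prod ν) :=
    ae_of_ae_map (p := fun z => g z = ∫ w, cycleSum h (z, w) ∂(ν.prod ν))
      (hP 0 1).aemeasurable (hP₀₁ ▸ hG.symm)
  exact hGg.trans hce.symm

end FourCopies

theorem stmt17_general {Ω : Type*} [MeasurableSpace Ω] (μ : Measure Ω) [IsProbabilityMeasure μ]
    {𝒳 : Type*} [MetricSpace 𝒳] [TopologicalSpace.SeparableSpace 𝒳]
    [MeasurableSpace 𝒳] [BorelSpace 𝒳]
    (β : ℝ)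
    (X : Ω → 𝒳) (Xs : Fin 4 → Ω → 𝒳)
    (hXsm : ∀ i, Measurable (Xs i))
    (hindep : iIndepFun Xs μ)
    (hid : ∀ i, IdentDistrib (Xs i) X μ μ)
    (hint : Integrable (hHat β Xs) μ) :
    ∃ g : 𝒳 × 𝒳 → ℝ, Measurable g ∧
      (fun ω => g (Xs 0 ω, Xs 1 ω)) =ᵐ[μ]
        μ[hHat β Xs | MeasurableSpace.comap (fun ω => (Xs 0 ω, Xs 1 ω)) inferInstance] ∧
      (∀ᵐ ω ∂μ, hHat β Xs ω =
        g (Xs 0 ω, Xs 1 ω) - g (Xs 1 ω, Xs 2 ω) + g (Xs 2 ω, Xs 3 ω) - g (Xs 3 ω, Xs 0 ω)) ∧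
      (∀ p : ℝ, 1 ≤ p →
        (MemLp (hHat β Xs) (ENNReal.ofReal p) μ ↔
          MemLp (fun ω => g (Xs 0 ω, Xs 1 ω)) (ENNReal.ofReal p) μ)) := by
  have : SecondCountableTopology 𝒳 := UniformSpace.secondCountable_of_separable 𝒳
  have hlaw : ∀ i, μ.map (Xs i) = μ.map X := fun i => (hid i).map_eq
  obtain ⟨g, hgm, hcycle, hce⟩ := exists_condExp_cycleSum_eq hindep hXsm hlaw
    (h := fun z => dist z.1 z.2 ^ β) (measurable_dist.pow_const β)
    (fun x y => by rw [dist_comm]) hint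
  have hdecomp : hHat β Xs = fun ω => cycleSum g ((Xs 0 ω, Xs 1 ω), (Xs 2 ω, Xs 3 ω)) := by
    rw [hcycle]
    rfl
  refine ⟨g, hgm, hce, .of_forall fun ω => congrFun hdecomp ω, fun p hp => ?_⟩
  rw [← hcycle] at hce
  rw [hdecomp]
  exact memLp_cycleSum_iff hindep hXsm hlaw hgm hce (ENNReal.one_le_ofReal.2 hp)

/-- Let `β > 0` and suppose `E|ĥ_X| < ∞`. Then there is a Borel
measurable `g : 𝒳×𝒳 → ℝ` such that `g(X₁,X₂)` is a version of `E(ĥ_X | X₁,X₂)` and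
almost surely `ĥ_X = g(X₁,X₂) − g(X₂,X₃) + g(X₃,X₄) − g(X₄,X₁)`. Consequently, for
every `p ≥ 1`, `ĥ_X ∈ L^p` iff `g(X₁,X₂) ∈ L^p`. -/
theorem stmt17 {Ω : Type*} [MeasurableSpace Ω] (μ : Measure Ω) [IsProbabilityMeasure μ]
    {𝒳 : Type*} [MetricSpace 𝒳] [TopologicalSpace.SeparableSpace 𝒳]
    [MeasurableSpace 𝒳] [BorelSpace 𝒳]
    (β : ℝ) (hβ : 0 < β)
    (X : Ω → 𝒳) (Xs : Fin 4 → Ω → 𝒳)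
    (hXm : Measurable X) (hXsm : ∀ i, Measurable (Xs i))
    (hindep : iIndepFun Xs μ)
    (hid : ∀ i, IdentDistrib (Xs i) X μ μ)
    (hint : Integrable (hHat β Xs) μ) :
    ∃ g : 𝒳 × 𝒳 → ℝ, Measurable g ∧
      (fun ω => g (Xs 0 ω, Xs 1 ω)) =ᵐ[μ]
        μ[hHat β Xs | MeasurableSpace.comap (fun ω => (Xs 0 ω, Xs 1 ω)) inferInstance] ∧
      (∀ᵐ ω ∂μ, hHat β Xs ω =
        g (Xs 0 ω, Xs 1 ω) - g (Xs 1 ω, Xs 2 ω) + g (Xs 2 ω, Xs 3 ω) - g (Xs 3 ω, Xs 0 ω)) ∧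
      (∀ p : ℝ, 1 ≤ p →
        (MemLp (hHat β Xs) (ENNReal.ofReal p) μ ↔
          MemLp (fun ω => g (Xs 0 ω, Xs 1 ω)) (ENNReal.ofReal p) μ)) :=
  stmt17_general μ β X Xs hXsm hindep hid hint
end
end

section
/- Let β > 0 and let X be a random variable in a separable metric space 𝒳. Then the following are equivalent: (i) E[ĥ_X²] < ∞; (ii) ĥ_X is integrable and E[t̃_X²] < ∞, where t̃_X := E(ĥ_X | X₁,X₂). Furthermore, if these hold, then (1/4)·E[ĥ_X²] = E[t̃_X²], i.e. hDC_β(X,X) = tDC_β(X,X). -/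
/-!
Write `ĥ = H((X₁,X₂),(X₃,X₄))` with `H(p,q) = g(p₁,p₂) − g(p₂,q₁) + g(q₁,q₂) − g(q₂,p₁)` for the
symmetric kernel `g = d^β`, let `ν` be the law of `X` and `φ(p) = ∫ H(p,q) dν²(q)`. By independence
`t̃ = φ(X₁,X₂)`, and almost surely `ĥ = φ(X₁,X₂) − φ(X₂,X₃) + φ(X₃,X₄) − φ(X₄,X₁)`: the moments
`∫ d(x,y)^β dν(y)`, which may be infinite, only enter through a function `A(y₁) − A(y₂)` of an
independent pair, whose integral vanishes by symmetry. Exchanging `X₁` and `X₃` changes the sign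
of `H`, so `∫ φ(u,v) dν(u) = 0` for a.e. `v`. Hence the four terms of the cyclic sum are pairwise
orthogonal in `L²`, each with squared norm `E t̃²`, which gives `E ĥ² = 4 E t̃²`, and `ĥ ∈ L²`
as soon as `φ ∈ L²`.
-/

open MeasureTheory ProbabilityTheory

noncomputable section

open Function

namespace MeasureTheory.MeasurePreserving

variable {α β : Type*} [MeasurableSpace α] [MeasurableSpace β] {μ : Measure α} {ν : Measure β}
  {f : α → β}

lemma integral_comp_of_aestronglyMeasurable (hf : MeasurePreserving f μ ν) {g : β → ℝ}
    (hg : AEStronglyMeasurable g ν) : ∫ x, g (f x) ∂μ = ∫ y, g y ∂ν := by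
  rw [← hf.map_eq] at hg ⊢
  exact (integral_map hf.measurable.aemeasurable hg).symm

lemma memLp_comp_iff (hf : MeasurePreserving f μ ν) {g : β → ℝ} (hg : AEStronglyMeasurable g ν)
    {p : ENNReal} : MemLp (g ∘ f) p μ ↔ MemLp g p ν := by
  rw [← hf.map_eq] at hg ⊢
  exact (memLp_map_measure_iff hg hf.measurable.aemeasurable).symm

lemma integral_eq_zero_of_comp_eq_neg {e : α → α} (he : MeasurePreserving e μ μ) {g : α → ℝ}
    (hg : AEStronglyMeasurable g μ) (hge : ∀ x, g (e x) = -g x) : ∫ x, g x ∂μ = 0 := by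
  have h := he.integral_comp_of_aestronglyMeasurable hg
  simp only [hge, integral_neg] at h
  linarith

end MeasureTheory.MeasurePreserving

lemma MeasureTheory.measurePreserving_assoc_swap {α β γ : Type*} [MeasurableSpace α]
    [MeasurableSpace β] [MeasurableSpace γ] (μ : Measure α) (ν : Measure β) (η : Measure γ)
    [SFinite μ] [SFinite ν] [SFinite η] :
    MeasurePreserving (fun x : (α × β) × γ => (x.1.2, (x.1.1, x.2)))
      ((μ.prod ν).prod η) (ν.prod (μ.prod η)) :=
  (measurePreserving_prodAssoc ν μ η).comp
    (Measure.measurePreserving_swap.prod (MeasurePreserving.id η))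

namespace ProbabilityTheory

variable {Ω β γ : Type*} [MeasurableSpace Ω] [MeasurableSpace β] [MeasurableSpace γ]
  {μ : Measure Ω} [IsFiniteMeasure μ] {κ : Measure β} {η : Measure γ}

lemma IndepFun.measurePreserving_prodMk {Y : Ω → β} {Z : Ω → γ} (h : IndepFun Y Z μ)
    (hY : MeasurePreserving Y μ κ) (hZ : MeasurePreserving Z μ η) :
    MeasurePreserving (fun ω => (Y ω, Z ω)) μ (κ.prod η) :=
  ⟨hY.measurable.prodMk hZ.measurable, by
    rw [h.map_prod_eq_prod_map_map hY.measurable.aemeasurable hZ.measurable.aemeasurable,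
      hY.map_eq, hZ.map_eq]⟩

namespace iIndepFun

variable {ι α : Type*} [MeasurableSpace α] {ν : Measure α} {X : ι → Ω → α}

lemma measurePreserving_pair (hX : iIndepFun X μ) (hlaw : ∀ i, MeasurePreserving (X i) μ ν)
    {i j : ι} (hij : i ≠ j) : MeasurePreserving (fun ω => (X i ω, X j ω)) μ (ν.prod ν) :=
  (hX.indepFun hij).measurePreserving_prodMk (hlaw i) (hlaw j)

lemma measurePreserving_triple (hX : iIndepFun X μ) (hlaw : ∀ i, MeasurePreserving (X i) μ ν)
    {a b c : ι} (hab : a ≠ b) (hac : a ≠ c) (hbc : b ≠ c) :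
    MeasurePreserving (fun ω => (X a ω, (X b ω, X c ω))) μ (ν.prod (ν.prod ν)) :=
  (hX.indepFun_prodMk (fun i => (hlaw i).measurable) b c a hab.symm hac.symm).symm
    |>.measurePreserving_prodMk (hlaw a) (hX.measurePreserving_pair hlaw hbc)

lemma measurePreserving_pair_pair (hX : iIndepFun X μ) (hlaw : ∀ i, MeasurePreserving (X i) μ ν)
    {a b c d : ι} (hab : a ≠ b) (hcd : c ≠ d) (hac : a ≠ c) (had : a ≠ d) (hbc : b ≠ c)
    (hbd : b ≠ d) :
    MeasurePreserving (fun ω => ((X a ω, X b ω), (X c ω, X d ω))) μ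
      ((ν.prod ν).prod (ν.prod ν)) :=
  (hX.indepFun_prodMk_prodMk (fun i => (hlaw i).measurable) a b c d hac had hbc hbd)
    |>.measurePreserving_prodMk (hX.measurePreserving_pair hlaw hab)
      (hX.measurePreserving_pair hlaw hcd)

lemma memLp_comp_pair (hX : iIndepFun X μ) (hlaw : ∀ i, MeasurePreserving (X i) μ ν)
    {φ : α × α → ℝ} (hφm : Measurable φ) (hφ : MemLp φ 2 (ν.prod ν)) {i j : ι} (hij : i ≠ j) :
    MemLp (fun ω => φ (X i ω, X j ω)) 2 μ :=
  ((hX.measurePreserving_pair hlaw hij).memLp_comp_iff hφm.aestronglyMeasurable).2 hφ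

end iIndepFun

lemma condExp_comp_prodMk_ae_eq [SFinite κ] [IsProbabilityMeasure η] {Y : Ω → β} {Z : Ω → γ}
    (hYZ : MeasurePreserving (fun ω => (Y ω, Z ω)) μ (κ.prod η)) {F : β → γ → ℝ}
    (hF : StronglyMeasurable (uncurry F)) (hFi : Integrable (uncurry F) (κ.prod η)) :
    μ[fun ω => F (Y ω) (Z ω) | MeasurableSpace.comap Y inferInstance]
      =ᵐ[μ] fun ω => ∫ z, F (Y ω) z ∂η := by
  have hY : MeasurePreserving Y μ κ := measurePreserving_fst.comp hYZ
  have hFY : StronglyMeasurable fun y => ∫ z, F y z ∂η := hF.integral_prod_right'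
  refine (ae_eq_condExp_of_forall_setIntegral_eq hY.measurable.comap_le
    ((hYZ.integrable_comp hF.aestronglyMeasurable).2 hFi)
    (fun s _ _ => ((hY.integrable_comp hFY.aestronglyMeasurable).2
      hFi.integral_prod_left).integrableOn) ?_
    (hFY.comp_measurable (comap_measurable Y)).aestronglyMeasurable).symm
  rintro _ ⟨B, hB, rfl⟩ -
  have hpre : (fun ω => (Y ω, Z ω)) ⁻¹' (B ×ˢ Set.univ) = Y ⁻¹' B := by ext; simp
  calc ∫ ω in Y ⁻¹' B, ∫ z, F (Y ω) z ∂η ∂μ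
      = ∫ y in B, ∫ z, F y z ∂η ∂κ :=
        (hY.restrict_preimage hB).integral_comp_of_aestronglyMeasurable
          hFY.aestronglyMeasurable.restrict
    _ = ∫ p in B ×ˢ Set.univ, uncurry F p ∂(κ.prod η) := by
        rw [setIntegral_prod _ hFi.integrableOn, Measure.restrict_univ]; rfl
    _ = ∫ ω in Y ⁻¹' B, F (Y ω) (Z ω) ∂μ := by
        rw [← hpre]
        exact ((hYZ.restrict_preimage (hB.prod .univ)).integral_comp_of_aestronglyMeasurable
          hF.aestronglyMeasurable.restrict).symm

end ProbabilityTheory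

section Kernel

variable {α : Type*} {g : α → α → ℝ}

def hKernel (g : α → α → ℝ) (p q : α × α) : ℝ :=
  g p.1 p.2 - g p.2 q.1 + g q.1 q.2 - g q.2 p.1

lemma hKernel_swap_fst_fst (hg : ∀ x y, g x y = g y x) (u v w z : α) :
    hKernel g (w, v) (u, z) = -hKernel g (u, v) (w, z) := by
  simp only [hKernel]
  rw [hg w v, hg v u, hg u z, hg z w]
  ring

lemma hKernel_cyclic_sum_sub (hg : ∀ x y, g x y = g y x) (a b c d : α) (y : α × α) :
    hKernel g (a, b) y - hKernel g (b, c) y + hKernel g (c, d) y - hKernel g (d, a) y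
        - hKernel g (a, b) (c, d)
      = (g a y.1 - g b y.1 + g c y.1 - g d y.1) - (g a y.2 - g b y.2 + g c y.2 - g d y.2) := by
  simp only [hKernel]
  rw [hg y.2 a, hg y.2 b, hg y.2 c, hg y.2 d]
  ring

variable [MeasurableSpace α]

lemma measurable_hKernel (hg : Measurable (uncurry g)) : Measurable (uncurry (hKernel g)) := by
  have hcomp {f f' : (α × α) × (α × α) → α} (hf : Measurable f) (hf' : Measurable f') :
      Measurable fun x => g (f x) (f' x) := hg.comp (hf.prodMk hf')
  exact (((hcomp measurable_fst.fst measurable_fst.snd).sub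
    (hcomp measurable_fst.snd measurable_snd.fst)).add
    (hcomp measurable_snd.fst measurable_snd.snd)).sub
    (hcomp measurable_snd.snd measurable_fst.fst)

variable (g) in
def tKernel (ν : Measure α) (p : α × α) : ℝ := ∫ q, hKernel g p q ∂(ν.prod ν)

variable {ν : Measure α}

lemma stronglyMeasurable_tKernel [SFinite ν] (hg : Measurable (uncurry g)) :
    StronglyMeasurable (tKernel g ν) :=
  (measurable_hKernel hg).stronglyMeasurable.integral_prod_right'

lemma tKernel_cyclic_sum [IsProbabilityMeasure ν] (hg : ∀ x y, g x y = g y x) {a b c d : α}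
    (hab : Integrable (hKernel g (a, b)) (ν.prod ν))
    (hbc : Integrable (hKernel g (b, c)) (ν.prod ν))
    (hcd : Integrable (hKernel g (c, d)) (ν.prod ν))
    (hda : Integrable (hKernel g (d, a)) (ν.prod ν)) :
    tKernel g ν (a, b) - tKernel g ν (b, c) + tKernel g ν (c, d) - tKernel g ν (d, a)
      = hKernel g (a, b) (c, d) := by
  have hsum : Integrable (fun y => hKernel g (a, b) y - hKernel g (b, c) y + hKernel g (c, d) y
      - hKernel g (d, a) y) (ν.prod ν) := ((hab.sub hbc).add hcd).sub hda
  have hzero : ∫ y, (hKernel g (a, b) y - hKernel g (b, c) y + hKernel g (c, d) y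
      - hKernel g (d, a) y - hKernel g (a, b) (c, d)) ∂(ν.prod ν) = 0 :=
    Measure.measurePreserving_swap.integral_eq_zero_of_comp_eq_neg
      (hsum.sub (integrable_const _)).aestronglyMeasurable
      fun y => by simp only [hKernel_cyclic_sum_sub hg, Prod.fst_swap, Prod.snd_swap]; ring
  rw [integral_sub hsum (integrable_const _), integral_sub, integral_add, integral_sub,
    integral_const, probReal_univ, one_smul] at hzero
  · unfold tKernel
    linarith
  all_goals fun_prop

lemma ae_integral_tKernel_fst_eq_zero [SFinite ν] (hg : ∀ x y, g x y = g y x)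
    (hgm : Measurable (uncurry g))
    (hint : Integrable (uncurry (hKernel g)) ((ν.prod ν).prod (ν.prod ν))) :
    ∀ᵐ v ∂ν, ∫ u, tKernel g ν (u, v) ∂ν = 0 := by
  have hmove := measurePreserving_assoc_swap ν ν (ν.prod ν)
  have htranspose : MeasurePreserving (fun x : α × α × α => (x.2.1, (x.1, x.2.2)))
      (ν.prod (ν.prod ν)) (ν.prod (ν.prod ν)) :=
    (measurePreserving_assoc_swap ν ν ν).comp ((measurePreserving_prodAssoc ν ν ν).symm _)
  have hsect : ∀ᵐ v ∂ν, Integrable (fun x : α × α × α => hKernel g (x.1, v) x.2)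
      (ν.prod (ν.prod ν)) := by
    have h : Integrable (fun y : α × α × (α × α) => hKernel g (y.2.1, y.1) y.2.2)
        (ν.prod (ν.prod (ν.prod ν))) :=
      (hmove.integrable_comp ((measurable_hKernel hgm).comp
        (f := fun y : α × α × (α × α) => ((y.2.1, y.1), y.2.2))
        (by fun_prop)).aestronglyMeasurable).1 hint
    exact h.prod_right_ae
  filter_upwards [hsect] with v hv
  calc ∫ u, tKernel g ν (u, v) ∂ν = ∫ x, hKernel g (x.1, v) x.2 ∂(ν.prod (ν.prod ν)) :=
        (integral_prod _ hv).symm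
    _ = 0 := htranspose.integral_eq_zero_of_comp_eq_neg hv.aestronglyMeasurable
        fun x => hKernel_swap_fst_fst hg _ _ _ _

end Kernel

section IID

variable {Ω ι α : Type*} [MeasurableSpace Ω] [MeasurableSpace α] {μ : Measure Ω}
  [IsFiniteMeasure μ] {ν : Measure α} {X : ι → Ω → α} {φ : α × α → ℝ}

lemma integral_eq_zero_of_ae_integral_fst_eq_zero [SFinite ν] (hφ : Integrable φ (ν.prod ν))
    (hψ : ∀ᵐ v ∂ν, ∫ u, φ (u, v) ∂ν = 0) : ∫ p, φ p ∂(ν.prod ν) = 0 := by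
  rw [integral_prod_symm _ hφ]
  exact integral_eq_zero_of_ae hψ

lemma integral_comp_pair_mul_eq_zero_of_adjacent [IsProbabilityMeasure ν] (hX : iIndepFun X μ)
    (hlaw : ∀ i, MeasurePreserving (X i) μ ν) (hφm : Measurable φ) (hφ : MemLp φ 2 (ν.prod ν))
    (hψ : ∀ᵐ v ∂ν, ∫ u, φ (u, v) ∂ν = 0) {a b c : ι} (hab : a ≠ b) (hac : a ≠ c) (hbc : b ≠ c) :
    ∫ ω, φ (X a ω, X b ω) * φ (X b ω, X c ω) ∂μ = 0 := by
  have h₁ : MemLp (fun x : α × α × α => φ (x.1, x.2.1)) 2 (ν.prod (ν.prod ν)) :=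
    (((MeasurePreserving.id ν).prod measurePreserving_fst).memLp_comp_iff
      hφm.aestronglyMeasurable).2 hφ
  have h₂ : MemLp (fun x : α × α × α => φ x.2) 2 (ν.prod (ν.prod ν)) :=
    (measurePreserving_snd.memLp_comp_iff hφm.aestronglyMeasurable).2 hφ
  rw [(hX.measurePreserving_triple hlaw hab hac hbc).integral_comp_of_aestronglyMeasurable
    (g := fun x : α × α × α => φ (x.1, x.2.1) * φ x.2) (by fun_prop),
    integral_prod_symm (fun x : α × α × α => φ (x.1, x.2.1) * φ x.2) (h₁.integrable_mul h₂)]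
  refine integral_eq_zero_of_ae ?_
  filter_upwards [measurePreserving_fst.quasiMeasurePreserving.ae hψ] with y hy
  rw [integral_mul_const, hy, zero_mul, Pi.zero_apply]

lemma integral_comp_pair_mul_eq_zero_of_disjoint [SFinite ν] (hX : iIndepFun X μ)
    (hlaw : ∀ i, MeasurePreserving (X i) μ ν) (hφm : Measurable φ) (hφ : Integrable φ (ν.prod ν))
    (hψ : ∀ᵐ v ∂ν, ∫ u, φ (u, v) ∂ν = 0) {a b c d : ι} (hab : a ≠ b) (hcd : c ≠ d) (hac : a ≠ c)
    (had : a ≠ d) (hbc : b ≠ c) (hbd : b ≠ d) :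
    ∫ ω, φ (X a ω, X b ω) * φ (X c ω, X d ω) ∂μ = 0 := by
  have hlaw₄ := hX.measurePreserving_pair_pair hlaw hab hcd hac had hbc hbd
  rw [hlaw₄.integral_comp_of_aestronglyMeasurable
    (g := fun x : (α × α) × (α × α) => φ x.1 * φ x.2) (by fun_prop), integral_prod_mul,
    integral_eq_zero_of_ae_integral_fst_eq_zero hφ hψ, zero_mul]

end IID

lemma integrable_and_integrable_condExp_sq {Ω : Type*} {m mΩ : MeasurableSpace Ω} {μ : Measure Ω}
    [IsFiniteMeasure μ] {f : Ω → ℝ} (hf : AEStronglyMeasurable f μ)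
    (h2 : Integrable (fun ω => f ω ^ 2) μ) :
    Integrable f μ ∧ Integrable (fun ω => μ[f | m] ω ^ 2) μ :=
  have hL2 := (memLp_two_iff_integrable_sq hf).2 h2
  ⟨hL2.integrable one_le_two, (hL2.condExp one_le_two).integrable_sq⟩

section Quadruple

variable {Ω α : Type*} [MeasurableSpace Ω] [MeasurableSpace α] {μ : Measure Ω}
  [IsFiniteMeasure μ] {ν : Measure α} {Xs : Fin 4 → Ω → α} {g : α → α → ℝ}

lemma measurePreserving_quadruple (hX : iIndepFun Xs μ)
    (hlaw : ∀ i, MeasurePreserving (Xs i) μ ν) :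
    MeasurePreserving (fun ω => ((Xs 0 ω, Xs 1 ω), (Xs 2 ω, Xs 3 ω))) μ
      ((ν.prod ν).prod (ν.prod ν)) :=
  hX.measurePreserving_pair_pair hlaw (by decide) (by decide) (by decide) (by decide) (by decide)
    (by decide)

lemma integrable_hKernel_comp_iff (hgm : Measurable (uncurry g)) (hX : iIndepFun Xs μ)
    (hlaw : ∀ i, MeasurePreserving (Xs i) μ ν) :
    Integrable (fun ω => hKernel g (Xs 0 ω, Xs 1 ω) (Xs 2 ω, Xs 3 ω)) μ
      ↔ Integrable (uncurry (hKernel g)) ((ν.prod ν).prod (ν.prod ν)) :=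
  (measurePreserving_quadruple hX hlaw).integrable_comp
    (measurable_hKernel hgm).aestronglyMeasurable

variable [IsProbabilityMeasure ν]

lemma integral_comp_pair_succ_mul_eq_ite {φ : α × α → ℝ} (hX : iIndepFun Xs μ)
    (hlaw : ∀ i, MeasurePreserving (Xs i) μ ν) (hφm : Measurable φ) (hφ : MemLp φ 2 (ν.prod ν))
    (hψ : ∀ᵐ v ∂ν, ∫ u, φ (u, v) ∂ν = 0) (i j : Fin 4) :
    ∫ ω, φ (Xs i ω, Xs (i + 1) ω) * φ (Xs j ω, Xs (j + 1) ω) ∂μ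
      = if i = j then ∫ p, φ p ^ 2 ∂(ν.prod ν) else 0 := by
  split_ifs with hij
  · subst hij
    simp only [← sq]
    have hlaw₂ := hX.measurePreserving_pair hlaw (i := i) (j := i + 1) (by revert i; decide)
    exact hlaw₂.integral_comp_of_aestronglyMeasurable (g := fun p => φ p ^ 2) (by fun_prop)
  · obtain rfl | rfl | rfl : j = i + 1 ∨ j = i + 2 ∨ i = j + 1 := by revert i j; decide
    · exact integral_comp_pair_mul_eq_zero_of_adjacent hX hlaw hφm hφ hψ
        (by revert i; decide) (by revert i; decide) (by revert i; decide)
    · exact integral_comp_pair_mul_eq_zero_of_disjoint hX hlaw hφm (hφ.integrable one_le_two) hψ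
        (by revert i; decide) (by revert i; decide) (by revert i; decide)
        (by revert i; decide) (by revert i; decide) (by revert i; decide)
    · simp only [mul_comm (φ (Xs (j + 1) _, _))]
      exact integral_comp_pair_mul_eq_zero_of_adjacent hX hlaw hφm hφ hψ
        (by revert j; decide) (by revert j; decide) (by revert j; decide)

lemma integral_cyclic_sum_sq {φ : α × α → ℝ} (hX : iIndepFun Xs μ)
    (hlaw : ∀ i, MeasurePreserving (Xs i) μ ν) (hφm : Measurable φ) (hφ : MemLp φ 2 (ν.prod ν))
    (hψ : ∀ᵐ v ∂ν, ∫ u, φ (u, v) ∂ν = 0) :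
    ∫ ω, (φ (Xs 0 ω, Xs 1 ω) - φ (Xs 1 ω, Xs 2 ω) + φ (Xs 2 ω, Xs 3 ω)
      - φ (Xs 3 ω, Xs 0 ω)) ^ 2 ∂μ = 4 * ∫ p, φ p ^ 2 ∂(ν.prod ν) := by
  set f : Fin 4 → Ω → ℝ := fun i ω => φ (Xs i ω, Xs (i + 1) ω) with hf
  have hf₂ (i : Fin 4) : MemLp (f i) 2 μ :=
    hX.memLp_comp_pair hlaw hφm hφ (by revert i; decide)
  have hexpand (ω : Ω) : (φ (Xs 0 ω, Xs 1 ω) - φ (Xs 1 ω, Xs 2 ω) + φ (Xs 2 ω, Xs 3 ω)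
      - φ (Xs 3 ω, Xs 0 ω)) ^ 2
        = ∑ i : Fin 4, ∑ j : Fin 4, ((-1) ^ (i : ℕ) * (-1) ^ (j : ℕ)) * (f i ω * f j ω) := by
    simp only [hf, Fin.sum_univ_four, Fin.reduceAdd, Fin.isValue, Fin.coe_ofNat_eq_mod,
      Nat.reduceMod]
    ring
  have hint (i j : Fin 4) :
      Integrable (fun ω => ((-1) ^ (i : ℕ) * (-1) ^ (j : ℕ)) * (f i ω * f j ω)) μ :=
    ((hf₂ i).integrable_mul (hf₂ j)).const_mul _
  simp_rw [hexpand]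
  rw [integral_finsetSum _ fun i _ => integrable_finsetSum _ fun j _ => hint i j]
  simp_rw [integral_finsetSum _ fun j _ => hint _ j, integral_const_mul, hf,
    integral_comp_pair_succ_mul_eq_ite hX hlaw hφm hφ hψ]
  simp only [mul_ite, mul_zero, Finset.sum_ite_eq, Finset.mem_univ, if_true, Fin.sum_univ_four,
    Fin.isValue, Fin.coe_ofNat_eq_mod, Nat.reduceMod]
  ring

lemma condExp_hKernel_comp_ae_eq (hgm : Measurable (uncurry g)) (hX : iIndepFun Xs μ)
    (hlaw : ∀ i, MeasurePreserving (Xs i) μ ν)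
    (hint : Integrable (uncurry (hKernel g)) ((ν.prod ν).prod (ν.prod ν))) :
    μ[fun ω => hKernel g (Xs 0 ω, Xs 1 ω) (Xs 2 ω, Xs 3 ω)
        | MeasurableSpace.comap (fun ω => (Xs 0 ω, Xs 1 ω)) inferInstance]
      =ᵐ[μ] fun ω => tKernel g ν (Xs 0 ω, Xs 1 ω) :=
  condExp_comp_prodMk_ae_eq (measurePreserving_quadruple hX hlaw)
    (measurable_hKernel hgm).stronglyMeasurable hint

lemma memLp_tKernel (hgm : Measurable (uncurry g)) (hX : iIndepFun Xs μ)
    (hlaw : ∀ i, MeasurePreserving (Xs i) μ ν)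
    (hint : Integrable (uncurry (hKernel g)) ((ν.prod ν).prod (ν.prod ν)))
    (ht : Integrable (fun ω => μ[fun ω => hKernel g (Xs 0 ω, Xs 1 ω) (Xs 2 ω, Xs 3 ω)
        | MeasurableSpace.comap (fun ω => (Xs 0 ω, Xs 1 ω)) inferInstance] ω ^ 2) μ) :
    MemLp (tKernel g ν) 2 (ν.prod ν) :=
  ((hX.measurePreserving_pair hlaw (i := 0) (j := 1) (by decide)).memLp_comp_iff
    (stronglyMeasurable_tKernel hgm).aestronglyMeasurable).1 <|
      (memLp_congr_ae (condExp_hKernel_comp_ae_eq hgm hX hlaw hint)).1 <|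
        (memLp_two_iff_integrable_sq integrable_condExp.aestronglyMeasurable).2 ht

lemma integral_condExp_hKernel_comp_sq (hgm : Measurable (uncurry g)) (hX : iIndepFun Xs μ)
    (hlaw : ∀ i, MeasurePreserving (Xs i) μ ν)
    (hint : Integrable (uncurry (hKernel g)) ((ν.prod ν).prod (ν.prod ν))) :
    ∫ ω, μ[fun ω => hKernel g (Xs 0 ω, Xs 1 ω) (Xs 2 ω, Xs 3 ω)
        | MeasurableSpace.comap (fun ω => (Xs 0 ω, Xs 1 ω)) inferInstance] ω ^ 2 ∂μ
      = ∫ p, tKernel g ν p ^ 2 ∂(ν.prod ν) := by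
  rw [integral_congr_ae ((condExp_hKernel_comp_ae_eq hgm hX hlaw hint).mono
    fun ω hω => congrArg (· ^ 2) hω)]
  have hlaw₂ := hX.measurePreserving_pair hlaw (i := 0) (j := 1) (by decide)
  exact hlaw₂.integral_comp_of_aestronglyMeasurable (g := fun p => tKernel g ν p ^ 2)
    ((stronglyMeasurable_tKernel hgm).measurable.pow_const 2).aestronglyMeasurable

lemma hKernel_comp_ae_eq_tKernel_cyclic_sum (hg : ∀ x y, g x y = g y x)
    (hX : iIndepFun Xs μ) (hlaw : ∀ i, MeasurePreserving (Xs i) μ ν)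
    (hint : Integrable (uncurry (hKernel g)) ((ν.prod ν).prod (ν.prod ν))) :
    (fun ω => hKernel g (Xs 0 ω, Xs 1 ω) (Xs 2 ω, Xs 3 ω)) =ᵐ[μ] fun ω =>
      tKernel g ν (Xs 0 ω, Xs 1 ω) - tKernel g ν (Xs 1 ω, Xs 2 ω) + tKernel g ν (Xs 2 ω, Xs 3 ω)
        - tKernel g ν (Xs 3 ω, Xs 0 ω) := by
  have hsect {i j : Fin 4} (hij : i ≠ j) :
      ∀ᵐ ω ∂μ, Integrable (hKernel g (Xs i ω, Xs j ω)) (ν.prod ν) :=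
    (hX.measurePreserving_pair hlaw hij).quasiMeasurePreserving.ae hint.prod_right_ae
  filter_upwards [hsect (i := 0) (j := 1) (by decide), hsect (i := 1) (j := 2) (by decide),
    hsect (i := 2) (j := 3) (by decide), hsect (i := 3) (j := 0) (by decide)]
    with ω h₀₁ h₁₂ h₂₃ h₃₀
  exact (tKernel_cyclic_sum hg h₀₁ h₁₂ h₂₃ h₃₀).symm

lemma integrable_hKernel_comp_sq (hg : ∀ x y, g x y = g y x) (hgm : Measurable (uncurry g))
    (hX : iIndepFun Xs μ) (hlaw : ∀ i, MeasurePreserving (Xs i) μ ν)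
    (hint : Integrable (uncurry (hKernel g)) ((ν.prod ν).prod (ν.prod ν)))
    (hφ : MemLp (tKernel g ν) 2 (ν.prod ν)) :
    Integrable (fun ω => hKernel g (Xs 0 ω, Xs 1 ω) (Xs 2 ω, Xs 3 ω) ^ 2) μ := by
  have hmem {i j : Fin 4} (hij : i ≠ j) :=
    hX.memLp_comp_pair hlaw (stronglyMeasurable_tKernel hgm).measurable hφ hij
  refine ((memLp_congr_ae (hKernel_comp_ae_eq_tKernel_cyclic_sum hg hX hlaw hint)).2
    ?_).integrable_sq
  exact (((hmem (i := 0) (j := 1) (by decide)).sub (hmem (i := 1) (j := 2) (by decide))).add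
    (hmem (i := 2) (j := 3) (by decide))).sub (hmem (i := 3) (j := 0) (by decide))

lemma integral_hKernel_comp_sq (hg : ∀ x y, g x y = g y x) (hgm : Measurable (uncurry g))
    (hX : iIndepFun Xs μ) (hlaw : ∀ i, MeasurePreserving (Xs i) μ ν)
    (hint : Integrable (uncurry (hKernel g)) ((ν.prod ν).prod (ν.prod ν)))
    (hφ : MemLp (tKernel g ν) 2 (ν.prod ν)) :
    ∫ ω, hKernel g (Xs 0 ω, Xs 1 ω) (Xs 2 ω, Xs 3 ω) ^ 2 ∂μ
      = 4 * ∫ p, tKernel g ν p ^ 2 ∂(ν.prod ν) := by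
  rw [integral_congr_ae ((hKernel_comp_ae_eq_tKernel_cyclic_sum hg hX hlaw hint).mono
    fun ω hω => congrArg (· ^ 2) hω)]
  exact integral_cyclic_sum_sq hX hlaw (stronglyMeasurable_tKernel hgm).measurable hφ
    (ae_integral_tKernel_fst_eq_zero hg hgm hint)

end Quadruple

theorem stmt18_general {Ω : Type*} [MeasurableSpace Ω] (μ : Measure Ω) [IsProbabilityMeasure μ]
    {𝒳 : Type*} [MetricSpace 𝒳] [TopologicalSpace.SeparableSpace 𝒳]
    [MeasurableSpace 𝒳] [BorelSpace 𝒳]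
    (β : ℝ)
    (X : Ω → 𝒳) (Xs : Fin 4 → Ω → 𝒳)
    (hXsm : ∀ i, Measurable (Xs i))
    (hindep : iIndepFun Xs μ)
    (hid : ∀ i, IdentDistrib (Xs i) X μ μ) :
    (Integrable (fun ω => hHat β Xs ω ^ 2) μ ↔
      (Integrable (hHat β Xs) μ ∧ Integrable (fun ω => tTilde β μ Xs ω ^ 2) μ)) ∧
    (Integrable (fun ω => hHat β Xs ω ^ 2) μ →
      (1 / 4 : ℝ) * ∫ ω, hHat β Xs ω ^ 2 ∂μ = ∫ ω, tTilde β μ Xs ω ^ 2 ∂μ) := by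
  have : SecondCountableTopology 𝒳 := UniformSpace.secondCountable_of_separable 𝒳
  set g : 𝒳 → 𝒳 → ℝ := fun x y => dist x y ^ β
  have hg (x y : 𝒳) : g x y = g y x := by simp only [g, dist_comm]
  have hgm : Measurable (uncurry g) := measurable_dist.pow_const β
  have : IsProbabilityMeasure (μ.map X) :=
    Measure.isProbabilityMeasure_map (hid 0).aemeasurable_snd
  have hlaw (i : Fin 4) : MeasurePreserving (Xs i) μ (μ.map X) := ⟨hXsm i, (hid i).map_eq⟩
  have hH : hHat β Xs = fun ω => hKernel g (Xs 0 ω, Xs 1 ω) (Xs 2 ω, Xs 3 ω) := rfl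
  unfold tTilde
  rw [hH]
  have hint := integrable_hKernel_comp_iff hgm hindep hlaw
  have hforward := integrable_and_integrable_condExp_sq (μ := μ)
    (m := MeasurableSpace.comap (fun ω => (Xs 0 ω, Xs 1 ω)) inferInstance)
    ((measurable_hKernel hgm).comp (f := fun ω => ((Xs 0 ω, Xs 1 ω), (Xs 2 ω, Xs 3 ω)))
      (by fun_prop)).aestronglyMeasurable
  refine ⟨⟨hforward, fun ⟨h, ht⟩ => ?_⟩, fun h2 => ?_⟩
  · exact integrable_hKernel_comp_sq hg hgm hindep hlaw (hint.1 h)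
      (memLp_tKernel hgm hindep hlaw (hint.1 h) ht)
  · obtain ⟨h, ht⟩ := hforward h2
    rw [integral_hKernel_comp_sq hg hgm hindep hlaw (hint.1 h)
        (memLp_tKernel hgm hindep hlaw (hint.1 h) ht),
      integral_condExp_hKernel_comp_sq hgm hindep hlaw (hint.1 h)]
    ring

/-- Let `β > 0` and `X` a random variable in a separable metric space.
Then `E[ĥ_X²] < ∞` iff (`ĥ_X` is integrable and `E[t̃_X²] < ∞`); and if these hold,
`(1/4)E[ĥ_X²] = E[t̃_X²]`, i.e. `hDC_β(X,X) = tDC_β(X,X)`. -/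
theorem stmt18 {Ω : Type*} [MeasurableSpace Ω] (μ : Measure Ω) [IsProbabilityMeasure μ]
    {𝒳 : Type*} [MetricSpace 𝒳] [TopologicalSpace.SeparableSpace 𝒳]
    [MeasurableSpace 𝒳] [BorelSpace 𝒳]
    (β : ℝ) (hβ : 0 < β)
    (X : Ω → 𝒳) (Xs : Fin 4 → Ω → 𝒳)
    (hXm : Measurable X) (hXsm : ∀ i, Measurable (Xs i))
    (hindep : iIndepFun Xs μ)
    (hid : ∀ i, IdentDistrib (Xs i) X μ μ) :
    (Integrable (fun ω => hHat β Xs ω ^ 2) μ ↔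
      (Integrable (hHat β Xs) μ ∧ Integrable (fun ω => tTilde β μ Xs ω ^ 2) μ)) ∧
    (Integrable (fun ω => hHat β Xs ω ^ 2) μ →
      (1 / 4 : ℝ) * ∫ ω, hHat β Xs ω ^ 2 ∂μ = ∫ ω, tTilde β μ Xs ω ^ 2 ∂μ) :=
  stmt18_general μ β X Xs hXsm hindep hid
end
end
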